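/- arXiv:1708.07236 — 8 statements merged into one kernel-verified Lean document; each statement's English description precedes it below -/
import Mathlib

section
/- The set R(n) of corner sum matrices of n×n alternating sign matrices is closed under entrywise maximum and entrywise minimum: for all A, B ∈ ASM(n) there exist C, D ∈ ASM(n) with r_C(i,j) = max(r_A(i,j), r_B(i,j)) and r_D(i,j) = min(r_A(i,j), r_B(i,j)) for all 1 ≤ i,j ≤ n. Consequently ASM(n), ordered by A ≤ B iff r_A(i,j) ≥ r_B(i,j) for all i,j, is a lattice in which the join of A and B has corner sums min(r_A, r_B) and the meet has corner sums max(r_A, r_B). -/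
/-- The entry of an `n × n` integer matrix in 1-based coordinates;
`0` outside the grid `[1,n] × [1,n]`. -/
def entry1 {n : ℕ} (A : Matrix (Fin n) (Fin n) ℤ) (i j : ℕ) : ℤ :=
  if h : 1 ≤ i ∧ i ≤ n ∧ 1 ≤ j ∧ j ≤ n then
    A ⟨i - 1, by omega⟩ ⟨j - 1, by omega⟩ else 0

/-- The corner sum `r_A(i,j) = ∑_{k ≤ i} ∑_{l ≤ j} a_{k l}` (1-based). -/
def cornerSum {n : ℕ} (A : Matrix (Fin n) (Fin n) ℤ) (i j : ℕ) : ℤ :=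
  ∑ k ∈ Finset.Icc 1 i, ∑ l ∈ Finset.Icc 1 j, entry1 A k l

/-- Partial row sum `∑_{l=1}^{j} a_{i l}`. -/
def rowPartial {n : ℕ} (A : Matrix (Fin n) (Fin n) ℤ) (i j : ℕ) : ℤ :=
  ∑ l ∈ Finset.Icc 1 j, entry1 A i l

/-- Partial column sum `∑_{k=1}^{i} a_{k j}`. -/
def colPartial {n : ℕ} (A : Matrix (Fin n) (Fin n) ℤ) (i j : ℕ) : ℤ :=
  ∑ k ∈ Finset.Icc 1 i, entry1 A k j

/-- `A` is an alternating sign matrix: every partial row and column sum is `0`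
or `1`, and every full row and column sums to `1`. -/
def IsASM {n : ℕ} (A : Matrix (Fin n) (Fin n) ℤ) : Prop :=
  (∀ i j : ℕ, rowPartial A i j = 0 ∨ rowPartial A i j = 1) ∧
  (∀ i j : ℕ, colPartial A i j = 0 ∨ colPartial A i j = 1) ∧
  (∀ i : ℕ, 1 ≤ i → i ≤ n → rowPartial A i n = 1) ∧
  (∀ j : ℕ, 1 ≤ j → j ≤ n → colPartial A n j = 1)

/-- `A` is a partial alternating sign matrix: every partial row and column sum
is `0` or `1`. -/
def IsPartialASM {n : ℕ} (A : Matrix (Fin n) (Fin n) ℤ) : Prop :=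
  (∀ i j : ℕ, rowPartial A i j = 0 ∨ rowPartial A i j = 1) ∧
  (∀ i j : ℕ, colPartial A i j = 0 ∨ colPartial A i j = 1)

/-- `(i,j)` (1-based) is in the Rothe diagram `D(A)`:
`∑_{k > i, l > j} a_{i l} a_{k j} = 1`. -/
def InDiagram {n : ℕ} (A : Matrix (Fin n) (Fin n) ℤ) (i j : ℕ) : Prop :=
  (∑ k ∈ Finset.Icc 1 n, ∑ l ∈ Finset.Icc 1 n,
    (if i < k ∧ j < l then entry1 A i l * entry1 A k j else 0)) = 1

/-- `(i,j)` is in the essential set `Ess(A)`. -/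
def InEss {n : ℕ} (A : Matrix (Fin n) (Fin n) ℤ) (i j : ℕ) : Prop :=
  InDiagram A i j ∧ ¬ InDiagram A (i + 1) j ∧ ¬ InDiagram A i (j + 1)

/-- The permutation matrix of `w` (a `1` in positions `(a, w a)`). -/
def permMatrix {n : ℕ} (w : Equiv.Perm (Fin n)) : Matrix (Fin n) (Fin n) ℤ :=
  Matrix.of fun a b => if w a = b then 1 else 0

/-- The value `w(a)` of the permutation `w` in 1-based coordinates, extended by
the identity outside `[1,n]`. -/
def pval {n : ℕ} (w : Equiv.Perm (Fin n)) (a : ℕ) : ℕ :=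
  if h : 1 ≤ a ∧ a ≤ n then ((w ⟨a - 1, by omega⟩ : Fin n) : ℕ) + 1 else a

/-- The value function (1-based) of the biGrassmannian permutation `[i,j,r]_b`. -/
def biGrFun (i j r a : ℕ) : ℕ :=
  if a ≤ r then a
  else if a ≤ i then a + (j - r)
  else if a ≤ i + j - r then a - (i - r)
  else a

/-- The permutation matrix of the biGrassmannian permutation `[i,j,r]_b ∈ S_n`. -/
def biGrMatrix (n i j r : ℕ) : Matrix (Fin n) (Fin n) ℤ :=
  Matrix.of fun a b => if biGrFun i j r ((a : ℕ) + 1) = (b : ℕ) + 1 then 1 else 0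

/-- `u ∈ S_n` is the biGrassmannian permutation `[i,j,r]_b`, i.e. its values
are given by the defining formula. -/
def IsBiGrPerm (n i j r : ℕ) (u : Equiv.Perm (Fin n)) : Prop :=
  ∀ a : ℕ, 1 ≤ a → a ≤ n → pval u a = biGrFun i j r a

/-- `(a,b)` (1-based) is in the Rothe diagram of the permutation `w`:
`w(a) > b` and `w⁻¹(b) > a`. -/
def InPermDiagram {n : ℕ} (w : Equiv.Perm (Fin n)) (a b : ℕ) : Prop :=
  1 ≤ a ∧ a ≤ n ∧ 1 ≤ b ∧ b ≤ n ∧ b < pval w a ∧ a < pval w⁻¹ b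

/-- `(a,b)` is in the essential set of the permutation `w`. -/
def InPermEss {n : ℕ} (w : Equiv.Perm (Fin n)) (a b : ℕ) : Prop :=
  InPermDiagram w a b ∧ ¬ InPermDiagram w (a + 1) b ∧ ¬ InPermDiagram w a (b + 1)

/-- `w` has a descent at (1-based) position `d`: `w(d) > w(d+1)`. -/
def HasDescentAt {n : ℕ} (w : Equiv.Perm (Fin n)) (d : ℕ) : Prop :=
  1 ≤ d ∧ d < n ∧ pval w (d + 1) < pval w d

/-- `u` is biGrassmannian: both `u` and `u⁻¹` have a unique descent. -/
def IsBiGrassmannian {n : ℕ} (u : Equiv.Perm (Fin n)) : Prop :=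
  (∃! d : ℕ, HasDescentAt u d) ∧ (∃! d : ℕ, HasDescentAt u⁻¹ d)

section Aux

variable {n : ℕ}

/-- inclusion–exclusion matrix from a corner-sum function -/
def mkMat (n : ℕ) (f : ℕ → ℕ → ℤ) : Matrix (Fin n) (Fin n) ℤ :=
  Matrix.of fun a b =>
    f ((a : ℕ) + 1) ((b : ℕ) + 1) - f (a : ℕ) ((b : ℕ) + 1)
      - f ((a : ℕ) + 1) (b : ℕ) + f (a : ℕ) (b : ℕ)

lemma entry1_out (A : Matrix (Fin n) (Fin n) ℤ) {i j : ℕ}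
    (h : ¬ (1 ≤ i ∧ i ≤ n ∧ 1 ≤ j ∧ j ≤ n)) : entry1 A i j = 0 := by
  rw [entry1, dif_neg h]

lemma entry1_mk (f : ℕ → ℕ → ℤ) {i j : ℕ}
    (h1 : 1 ≤ i) (h2 : i ≤ n) (h3 : 1 ≤ j) (h4 : j ≤ n) :
    entry1 (mkMat n f) i j
      = f i j - f (i - 1) j - f i (j - 1) + f (i - 1) (j - 1) := by
  rw [entry1, dif_pos ⟨h1, h2, h3, h4⟩]
  show f (i - 1 + 1) (j - 1 + 1) - f (i - 1) (j - 1 + 1)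
      - f (i - 1 + 1) (j - 1) + f (i - 1) (j - 1) = _
  rw [Nat.sub_add_cancel h1, Nat.sub_add_cancel h3]

lemma rowPartial_out (A : Matrix (Fin n) (Fin n) ℤ) {i : ℕ} (j : ℕ)
    (h : ¬ (1 ≤ i ∧ i ≤ n)) : rowPartial A i j = 0 := by
  rw [rowPartial]
  refine Finset.sum_eq_zero fun l _ => entry1_out A (by tauto)

lemma colPartial_out (A : Matrix (Fin n) (Fin n) ℤ) (i : ℕ) {j : ℕ}
    (h : ¬ (1 ≤ j ∧ j ≤ n)) : colPartial A i j = 0 := by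
  rw [colPartial]
  refine Finset.sum_eq_zero fun k _ => entry1_out A (by tauto)

lemma rowPartial_mk (f : ℕ → ℕ → ℤ) (h0 : ∀ i, f i 0 = 0) {i : ℕ}
    (h1 : 1 ≤ i) (h2 : i ≤ n) (j : ℕ) :
    rowPartial (mkMat n f) i j = f i (min j n) - f (i - 1) (min j n) := by
  induction j with
  | zero => simp [rowPartial, h0]
  | succ j ih =>
      rw [rowPartial, Finset.sum_Icc_succ_top (by omega)]
      rw [show (∑ l ∈ Finset.Icc 1 j, entry1 (mkMat n f) i l)
          = rowPartial (mkMat n f) i j from rfl, ih]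
      by_cases hj : j + 1 ≤ n
      · rw [entry1_mk f h1 h2 (by omega) hj]
        rw [show min (j+1) n = j + 1 by omega, show min j n = j by omega,
          Nat.add_sub_cancel]
        ring
      · rw [entry1_out _ (by omega)]
        rw [show min (j+1) n = n by omega, show min j n = n by omega]
        ring

lemma colPartial_mk (f : ℕ → ℕ → ℤ) (h0 : ∀ j, f 0 j = 0) {j : ℕ}
    (h1 : 1 ≤ j) (h2 : j ≤ n) (i : ℕ) :
    colPartial (mkMat n f) i j = f (min i n) j - f (min i n) (j - 1) := by
  induction i with
  | zero => simp [colPartial, h0]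
  | succ i ih =>
      rw [colPartial, Finset.sum_Icc_succ_top (by omega)]
      rw [show (∑ k ∈ Finset.Icc 1 i, entry1 (mkMat n f) k j)
          = colPartial (mkMat n f) i j from rfl, ih]
      by_cases hi : i + 1 ≤ n
      · rw [entry1_mk f (by omega) hi h1 h2]
        rw [show min (i+1) n = i + 1 by omega, show min i n = i by omega,
          Nat.add_sub_cancel]
        ring
      · rw [entry1_out _ (by omega)]
        rw [show min (i+1) n = n by omega, show min i n = n by omega]
        ring

lemma cornerSum_row_succ (A : Matrix (Fin n) (Fin n) ℤ) (i j : ℕ) :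
    cornerSum A (i + 1) j = cornerSum A i j + rowPartial A (i + 1) j := by
  rw [cornerSum, Finset.sum_Icc_succ_top (by omega)]; rfl

lemma cornerSum_eq_col (A : Matrix (Fin n) (Fin n) ℤ) (i j : ℕ) :
    cornerSum A i j = ∑ l ∈ Finset.Icc 1 j, colPartial A i l :=
  Finset.sum_comm

lemma cornerSum_col_succ (A : Matrix (Fin n) (Fin n) ℤ) (i j : ℕ) :
    cornerSum A i (j + 1) = cornerSum A i j + colPartial A i (j + 1) := by
  rw [cornerSum_eq_col, Finset.sum_Icc_succ_top (by omega), ← cornerSum_eq_col]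

lemma cornerSum_row_diff (A : Matrix (Fin n) (Fin n) ℤ) {i : ℕ} (h : 1 ≤ i)
    (j : ℕ) : cornerSum A i j = cornerSum A (i - 1) j + rowPartial A i j := by
  obtain ⟨i', rfl⟩ : ∃ i', i = i' + 1 := ⟨i - 1, by omega⟩
  rw [Nat.add_sub_cancel, cornerSum_row_succ]

lemma cornerSum_col_diff (A : Matrix (Fin n) (Fin n) ℤ) (i : ℕ) {j : ℕ}
    (h : 1 ≤ j) : cornerSum A i j = cornerSum A i (j - 1) + colPartial A i j := by
  obtain ⟨j', rfl⟩ : ∃ j', j = j' + 1 := ⟨j - 1, by omega⟩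
  rw [Nat.add_sub_cancel, cornerSum_col_succ]

lemma cornerSum_row_full (A : Matrix (Fin n) (Fin n) ℤ) (hA : IsASM A)
    {i : ℕ} (h : i ≤ n) : cornerSum A i n = (i : ℤ) := by
  induction i with
  | zero => simp [cornerSum]
  | succ i ih =>
      rw [cornerSum_row_succ, ih (by omega), hA.2.2.1 (i+1) (by omega) h]
      push_cast; ring

lemma cornerSum_col_full (A : Matrix (Fin n) (Fin n) ℤ) (hA : IsASM A)
    {j : ℕ} (h : j ≤ n) : cornerSum A n j = (j : ℤ) := by
  induction j with
  | zero => simp [cornerSum]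
  | succ j ih =>
      rw [cornerSum_col_succ, ih (by omega), hA.2.2.2 (j+1) (by omega) h]
      push_cast; ring

/-- Any function with ASM-like corner-sum properties is the corner sum of an ASM. -/
lemma build (n : ℕ) (f : ℕ → ℕ → ℤ)
    (h0r : ∀ j, f 0 j = 0) (h0c : ∀ i, f i 0 = 0)
    (hdr : ∀ i j, 1 ≤ i → i ≤ n → j ≤ n →
      f i j - f (i - 1) j = 0 ∨ f i j - f (i - 1) j = 1)
    (hdc : ∀ i j, 1 ≤ j → j ≤ n → i ≤ n →
      f i j - f i (j - 1) = 0 ∨ f i j - f i (j - 1) = 1)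
    (hrn : ∀ i, i ≤ n → f i n = (i : ℤ))
    (hcn : ∀ j, j ≤ n → f n j = (j : ℤ)) :
    ∃ C : Matrix (Fin n) (Fin n) ℤ, IsASM C ∧
      ∀ i j : ℕ, 1 ≤ i → i ≤ n → 1 ≤ j → j ≤ n → cornerSum C i j = f i j := by
  refine ⟨mkMat n f, ⟨?_, ?_, ?_, ?_⟩, ?_⟩
  · intro i j
    by_cases hi : 1 ≤ i ∧ i ≤ n
    · rw [rowPartial_mk f h0c hi.1 hi.2 j]
      exact hdr i (min j n) hi.1 hi.2 (by omega)
    · rw [rowPartial_out _ j hi]; left; rfl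
  · intro i j
    by_cases hj : 1 ≤ j ∧ j ≤ n
    · rw [colPartial_mk f h0r hj.1 hj.2 i]
      exact hdc (min i n) j hj.1 hj.2 (by omega)
    · rw [colPartial_out _ i hj]; left; rfl
  · intro i h1 h2
    rw [rowPartial_mk f h0c h1 h2 n, Nat.min_self, hrn i h2, hrn (i-1) (by omega)]
    omega
  · intro j h1 h2
    rw [colPartial_mk f h0r h1 h2 n, Nat.min_self, hcn j h2, hcn (j-1) (by omega)]
    omega
  · intro i j h1 h2 h3 h4
    clear h1
    induction i with
    | zero => simp [cornerSum, h0r]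
    | succ i ih =>
        rw [cornerSum_row_succ, ih (by omega),
          rowPartial_mk f h0c (by omega) h2 j, show min j n = j by omega,
          Nat.add_sub_cancel]
        ring

end Aux

/-- The set of corner sum matrices of `n × n` ASMs is closed under
entrywise maximum and entrywise minimum; consequently `ASM(n)`, ordered by
`A ≤ B` iff `r_A ≥ r_B` entrywise, is a lattice in which the join of `A` and `B`
has corner sums `min(r_A, r_B)` and the meet has corner sums `max(r_A, r_B)`. -/
theorem stmt0 {n : ℕ} (A B : Matrix (Fin n) (Fin n) ℤ)
    (hA : IsASM A) (hB : IsASM B) :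
    (∃ C : Matrix (Fin n) (Fin n) ℤ, IsASM C ∧
      ∀ i j : ℕ, 1 ≤ i → i ≤ n → 1 ≤ j → j ≤ n →
        cornerSum C i j = max (cornerSum A i j) (cornerSum B i j)) ∧
    (∃ D : Matrix (Fin n) (Fin n) ℤ, IsASM D ∧
      ∀ i j : ℕ, 1 ≤ i → i ≤ n → 1 ≤ j → j ≤ n →
        cornerSum D i j = min (cornerSum A i j) (cornerSum B i j)) := by
  constructor
  · obtain ⟨C, hC, hcs⟩ := build n (fun i j => max (cornerSum A i j) (cornerSum B i j))
      (fun j => by simp [cornerSum]) (fun i => by simp [cornerSum])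
      (fun i j h1 h2 hj => by
        have ha := cornerSum_row_diff A h1 j
        have hb := cornerSum_row_diff B h1 j
        have ha' := hA.1 i j
        have hb' := hB.1 i j
        simp only [max_def]; split_ifs <;> omega)
      (fun i j h1 h2 hi => by
        have ha := cornerSum_col_diff A i h1
        have hb := cornerSum_col_diff B i h1
        have ha' := hA.2.1 i j
        have hb' := hB.2.1 i j
        simp only [max_def]; split_ifs <;> omega)
      (fun i hi => by
        simp [cornerSum_row_full A hA hi, cornerSum_row_full B hB hi])
      (fun j hj => by
        simp [cornerSum_col_full A hA hj, cornerSum_col_full B hB hj])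
    exact ⟨C, hC, fun i j h1 h2 h3 h4 => hcs i j h1 h2 h3 h4⟩
  · obtain ⟨D, hD, hcs⟩ := build n (fun i j => min (cornerSum A i j) (cornerSum B i j))
      (fun j => by simp [cornerSum]) (fun i => by simp [cornerSum])
      (fun i j h1 h2 hj => by
        have ha := cornerSum_row_diff A h1 j
        have hb := cornerSum_row_diff B h1 j
        have ha' := hA.1 i j
        have hb' := hB.1 i j
        simp only [min_def]; split_ifs <;> omega)
      (fun i j h1 h2 hi => by
        have ha := cornerSum_col_diff A i h1
        have hb := cornerSum_col_diff B i h1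
        have ha' := hA.2.1 i j
        have hb' := hB.2.1 i j
        simp only [min_def]; split_ifs <;> omega)
      (fun i hi => by
        simp [cornerSum_row_full A hA hi, cornerSum_row_full B hB hi])
      (fun j hj => by
        simp [cornerSum_col_full A hA hj, cornerSum_col_full B hB hj])
    exact ⟨D, hD, fun i j h1 h2 h3 h4 => hcs i j h1 h2 h3 h4⟩
end

section
/- Let A ∈ ASM(n). For all 1 ≤ i,j ≤ n, the cell (i,j) lies in the Rothe diagram D(A) if and only if r_A(i,j) = r_A(i−1,j) = r_A(i,j−1). -/
open Finset in
lemma sum_ite_gt_aux (f : ℕ → ℤ) {j n : ℕ} (hjn : j ≤ n) :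
    ∑ l ∈ Icc 1 n, (if j < l then f l else 0)
      = ∑ l ∈ Icc 1 n, f l - ∑ l ∈ Icc 1 j, f l := by
  have hsplit : Icc 1 n = Icc 1 j ∪ Ioc j n := by
    ext x; simp [Finset.mem_Icc, Finset.mem_Ioc]; omega
  have hdisj : Disjoint (Icc 1 j) (Ioc j n) := by
    simp [Finset.disjoint_left, Finset.mem_Icc, Finset.mem_Ioc]
    omega
  rw [hsplit, Finset.sum_union hdisj, Finset.sum_union hdisj]
  have h1 : ∑ l ∈ Icc 1 j, (if j < l then f l else 0) = 0 := by
    apply Finset.sum_eq_zero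
    intro x hx
    simp only [Finset.mem_Icc] at hx
    rw [if_neg (by omega)]
  have h2 : ∑ l ∈ Ioc j n, (if j < l then f l else 0) = ∑ l ∈ Ioc j n, f l := by
    apply Finset.sum_congr rfl
    intro x hx
    simp only [Finset.mem_Ioc] at hx
    rw [if_pos (by omega)]
  rw [h1, h2]; ring

open Finset in
lemma cornerSum_row_aux {n : ℕ} (A : Matrix (Fin n) (Fin n) ℤ) {i : ℕ} (j : ℕ)
    (hi : 1 ≤ i) :
    cornerSum A i j = cornerSum A (i - 1) j + rowPartial A i j := by
  obtain ⟨i', rfl⟩ : ∃ i', i = i' + 1 := ⟨i - 1, by omega⟩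
  unfold cornerSum rowPartial
  rw [Finset.sum_Icc_succ_top (by omega)]
  simp

open Finset in
lemma cornerSum_swap_aux {n : ℕ} (A : Matrix (Fin n) (Fin n) ℤ) (i j : ℕ) :
    cornerSum A i j = ∑ l ∈ Icc 1 j, colPartial A i l := by
  unfold cornerSum colPartial
  exact Finset.sum_comm

open Finset in
lemma cornerSum_col_aux {n : ℕ} (A : Matrix (Fin n) (Fin n) ℤ) (i : ℕ) {j : ℕ}
    (hj : 1 ≤ j) :
    cornerSum A i j = cornerSum A i (j - 1) + colPartial A i j := by
  obtain ⟨j', rfl⟩ : ∃ j', j = j' + 1 := ⟨j - 1, by omega⟩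
  rw [cornerSum_swap_aux, cornerSum_swap_aux]
  rw [Finset.sum_Icc_succ_top (by omega)]
  simp

/-- For an ASM `A` and `1 ≤ i,j ≤ n`, the cell `(i,j)` lies in the
Rothe diagram `D(A)` iff `r_A(i,j) = r_A(i-1,j) = r_A(i,j-1)`. -/
theorem stmt1 {n : ℕ} (A : Matrix (Fin n) (Fin n) ℤ) (hA : IsASM A)
    (i j : ℕ) (hi : 1 ≤ i) (hi' : i ≤ n) (hj : 1 ≤ j) (hj' : j ≤ n) :
    InDiagram A i j ↔
      (cornerSum A i j = cornerSum A (i - 1) j ∧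
       cornerSum A i j = cornerSum A i (j - 1)) := by
  have hrow := cornerSum_row_aux A j hi
  have hcol := cornerSum_col_aux A i hj
  have hfact : (∑ k ∈ Finset.Icc 1 n, ∑ l ∈ Finset.Icc 1 n,
      (if i < k ∧ j < l then entry1 A i l * entry1 A k j else 0))
      = (∑ l ∈ Finset.Icc 1 n, if j < l then entry1 A i l else 0)
        * (∑ k ∈ Finset.Icc 1 n, if i < k then entry1 A k j else 0) := by
    rw [Finset.sum_mul_sum]
    rw [Finset.sum_comm]
    apply Finset.sum_congr rfl
    intro l _
    apply Finset.sum_congr rfl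
    intro k _
    by_cases hk : i < k <;> by_cases hl : j < l <;> simp [hk, hl]
  have hP : (∑ l ∈ Finset.Icc 1 n, if j < l then entry1 A i l else 0)
      = 1 - rowPartial A i j := by
    rw [sum_ite_gt_aux _ hj']
    have := hA.2.2.1 i hi hi'
    unfold rowPartial at *
    omega
  have hQ : (∑ k ∈ Finset.Icc 1 n, if i < k then entry1 A k j else 0)
      = 1 - colPartial A i j := by
    rw [sum_ite_gt_aux _ hi']
    have := hA.2.2.2 j hj hj'
    unfold colPartial at *
    omega
  rw [InDiagram, hfact, hP, hQ]
  rcases hA.1 i j with h1 | h1 <;> rcases hA.2.1 i j with h2 | h2 <;>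
    rw [h1] at hrow ⊢ <;> rw [h2] at hcol ⊢ <;> constructor <;> intro h <;>
    (try exact ⟨by linarith, by linarith⟩) <;>
    (try norm_num) <;>
    (try norm_num at h) <;>
    (exfalso; obtain ⟨ha, hb⟩ := h; linarith)
end

section
/- Let A ∈ ASM(n). Then Ess(A) equals the set of pairs (i,j) with 1 ≤ i,j ≤ n−1 such that r_A(i,j) = r_A(i−1,j) = r_A(i,j−1) and r_A(i,j) + 1 = r_A(i+1,j) = r_A(i,j+1); in particular Ess(A) contains no cell in row n or column n. -/
/-!
For an ASM the double sum defining `D(A)` factors as `(1 - R(i,j)) * (1 - C(i,j))`, where `R` and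
`C` are the partial row and column sums, which take values in `{0, 1}`; so `(i,j) ∈ D(A)` iff both
vanish. The corner-sum increments `r(i,j) - r(i-1,j)` and `r(i,j) - r(i,j-1)` are exactly these
partial sums, which turns the description of `Ess(A)` into the stated corner-sum conditions.
-/

section ASMEssentialSet

variable {n : ℕ} (A : Matrix (Fin n) (Fin n) ℤ) {i j : ℕ}

theorem entry1_eq_zero (h : ¬ (1 ≤ i ∧ i ≤ n ∧ 1 ≤ j ∧ j ≤ n)) : entry1 A i j = 0 :=
  dif_neg h

theorem rowPartial_succ (i j : ℕ) :
    rowPartial A i (j + 1) = rowPartial A i j + entry1 A i (j + 1) :=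
  Finset.sum_Icc_succ_top (by omega) _

theorem colPartial_succ (i j : ℕ) :
    colPartial A (i + 1) j = colPartial A i j + entry1 A (i + 1) j :=
  Finset.sum_Icc_succ_top (by omega) _

theorem cornerSum_succ_left (i j : ℕ) :
    cornerSum A (i + 1) j = cornerSum A i j + rowPartial A (i + 1) j :=
  Finset.sum_Icc_succ_top (by omega) _

theorem cornerSum_succ_right (i j : ℕ) :
    cornerSum A i (j + 1) = cornerSum A i j + colPartial A i (j + 1) := by
  simp only [cornerSum, colPartial, Finset.sum_Icc_succ_top (by omega : 1 ≤ j + 1),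
    Finset.sum_add_distrib]

theorem sum_Icc_ite_lt {f : ℕ → ℤ} (hj : j ≤ n) :
    ∑ l ∈ Finset.Icc 1 n, (if j < l then f l else 0)
      = ∑ l ∈ Finset.Icc 1 n, f l - ∑ l ∈ Finset.Icc 1 j, f l := by
  have hIcc : Finset.Icc 1 j = (Finset.Icc 1 n).filter (fun l => ¬ j < l) := by
    ext l; simp only [Finset.mem_Icc, Finset.mem_filter]; omega
  rw [← Finset.sum_filter, hIcc, eq_sub_iff_add_eq, Finset.sum_filter_add_sum_filter_not]

theorem diagramSum_eq_mul (hi : i ≤ n) (hj : j ≤ n) :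
    (∑ k ∈ Finset.Icc 1 n, ∑ l ∈ Finset.Icc 1 n,
      (if i < k ∧ j < l then entry1 A i l * entry1 A k j else 0))
    = (rowPartial A i n - rowPartial A i j) * (colPartial A n j - colPartial A i j) := by
  have hsplit : ∀ k l : ℕ, (if i < k ∧ j < l then entry1 A i l * entry1 A k j else 0)
      = (if i < k then entry1 A k j else 0) * (if j < l then entry1 A i l else 0) := by
    intro k l
    split_ifs <;> simp_all [mul_comm]
  simp_rw [hsplit, ← Finset.mul_sum, ← Finset.sum_mul]
  rw [sum_Icc_ite_lt hj, sum_Icc_ite_lt hi, mul_comm]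
  rfl

theorem not_inDiagram (h : ¬ (1 ≤ i ∧ i ≤ n ∧ 1 ≤ j ∧ j ≤ n)) : ¬ InDiagram A i j := by
  have hzero : ∀ k l : ℕ, entry1 A i l * entry1 A k j = 0 := by
    intro k l
    by_cases hi : 1 ≤ i ∧ i ≤ n
    · rw [entry1_eq_zero A (j := j) (by omega), mul_zero]
    · rw [entry1_eq_zero A (i := i) (by omega), zero_mul]
  simp [InDiagram, hzero]

variable {A}

theorem IsPartialASM.rowPartial_eq_one_of_entry1_eq_one (hA : IsPartialASM A)
    (h : entry1 A i j = 1) :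
    rowPartial A i j = 1 := by
  cases j with
  | zero => simp [entry1_eq_zero A (i := i) (j := 0) (by omega)] at h
  | succ m =>
    have := rowPartial_succ A i m
    rcases hA.1 i m with _ | _ <;> rcases hA.1 i (m + 1) with _ | _ <;> omega

theorem IsPartialASM.colPartial_eq_one_of_entry1_eq_one (hA : IsPartialASM A)
    (h : entry1 A i j = 1) :
    colPartial A i j = 1 := by
  cases i with
  | zero => simp [entry1_eq_zero A (i := 0) (j := j) (by omega)] at h
  | succ m =>
    have := colPartial_succ A m j
    rcases hA.2 m j with _ | _ <;> rcases hA.2 (m + 1) j with _ | _ <;> omega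

theorem IsASM.isPartialASM (hA : IsASM A) : IsPartialASM A :=
  ⟨hA.1, hA.2.1⟩

theorem IsASM.inDiagram_iff (hA : IsASM A) :
    InDiagram A i j ↔
      (1 ≤ i ∧ i ≤ n ∧ 1 ≤ j ∧ j ≤ n) ∧ rowPartial A i j = 0 ∧ colPartial A i j = 0 := by
  by_cases hgrid : 1 ≤ i ∧ i ≤ n ∧ 1 ≤ j ∧ j ≤ n
  · obtain ⟨hi, hin, hj, hjn⟩ := hgrid
    rw [InDiagram, diagramSum_eq_mul A hin hjn, hA.2.2.1 i hi hin, hA.2.2.2 j hj hjn]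
    rcases hA.1 i j with hR | hR <;> rcases hA.2.1 i j with hC | hC <;> simp [*]
  · exact iff_of_false (not_inDiagram A hgrid) fun h => hgrid h.1

theorem IsASM.inEss_iff (hA : IsASM A) :
    InEss A i j ↔
      1 ≤ i ∧ i + 1 ≤ n ∧ 1 ≤ j ∧ j + 1 ≤ n ∧
        rowPartial A i j = 0 ∧ colPartial A i j = 0 ∧
        rowPartial A (i + 1) j = 1 ∧ colPartial A i (j + 1) = 1 := by
  have hP := hA.isPartialASM
  rw [InEss, hA.inDiagram_iff, hA.inDiagram_iff, hA.inDiagram_iff]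
  have hR := rowPartial_succ A i j
  have hC := colPartial_succ A i j
  constructor
  · rintro ⟨⟨⟨hi, hin, hj, hjn⟩, hR0, hC0⟩, hdown, hright⟩
    -- row `i` and column `j` sum to `1`, so `(i, j)` lies in neither the last row nor column
    have hin' : i + 1 ≤ n := by
      by_contra h
      have := hA.2.2.2 j hj hjn
      obtain rfl : i = n := by omega
      omega
    have hjn' : j + 1 ≤ n := by
      by_contra h
      have := hA.2.2.1 i hi hin
      obtain rfl : j = n := by omega
      omega
    -- if row `i + 1` is still `0` at column `j`, then column `j` has its `1` at `(i + 1, j)`,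
    -- which makes row `i + 1` equal `1` there after all
    have hR1 : rowPartial A (i + 1) j = 1 := by
      rcases hP.1 (i + 1) j with h | h
      · have h' := (hP.2 (i + 1) j).resolve_left fun h' => hdown ⟨by omega, h, h'⟩
        exact hP.rowPartial_eq_one_of_entry1_eq_one (by omega)
      · exact h
    have hC1 : colPartial A i (j + 1) = 1 := by
      rcases hP.2 i (j + 1) with h | h
      · have h' := (hP.1 i (j + 1)).resolve_left fun h' => hright ⟨by omega, h', h⟩
        exact hP.colPartial_eq_one_of_entry1_eq_one (by omega)
      · exact h
    exact ⟨hi, hin', hj, hjn', hR0, hC0, hR1, hC1⟩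
  · rintro ⟨hi, hin, hj, hjn, hR0, hC0, hR1, hC1⟩
    exact ⟨⟨⟨hi, by omega, hj, by omega⟩, hR0, hC0⟩, fun h => by omega, fun h => by omega⟩

end ASMEssentialSet

/-- For an ASM `A`, `Ess(A)` equals the set of pairs `(i,j)` with
`1 ≤ i,j ≤ n-1` such that `r_A(i,j) = r_A(i-1,j) = r_A(i,j-1)` and
`r_A(i,j) + 1 = r_A(i+1,j) = r_A(i,j+1)`; in particular `Ess(A)` contains no
cell in row `n` or column `n`. -/
theorem stmt2 {n : ℕ} (A : Matrix (Fin n) (Fin n) ℤ) (hA : IsASM A) :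
    ∀ i j : ℕ, InEss A i j ↔
      (1 ≤ i ∧ i + 1 ≤ n ∧ 1 ≤ j ∧ j + 1 ≤ n ∧
       cornerSum A i j = cornerSum A (i - 1) j ∧
       cornerSum A i j = cornerSum A i (j - 1) ∧
       cornerSum A i j + 1 = cornerSum A (i + 1) j ∧
       cornerSum A i j + 1 = cornerSum A i (j + 1)) := by
  intro i j
  rw [hA.inEss_iff]
  have hleft := cornerSum_succ_left A i j
  have hright := cornerSum_succ_right A i j
  refine and_congr_right fun hi => and_congr_right fun _ => and_congr_right fun hj => ?_
  have hup := cornerSum_succ_left A (i - 1) j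
  have hback := cornerSum_succ_right A i (j - 1)
  rw [Nat.sub_add_cancel hi] at hup
  rw [Nat.sub_add_cancel hj] at hback
  omega
end

section
/- Let (i,j,r) satisfy 1 ≤ i,j, 0 ≤ r < min(i,j), i + j − r ≤ n. Then [i,j,r]_b is the minimum of the set {A ∈ ASM(n) : r_A(i,j) ≤ r} in the ASM order: r_{[i,j,r]_b}(i,j) = r, and for every A ∈ ASM(n) with r_A(i,j) ≤ r one has r_A(a,b) ≤ r_{[i,j,r]_b}(a,b) for all 1 ≤ a,b ≤ n (i.e. [i,j,r]_b ≤ A). -/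
namespace Stmt4Aux

lemma biGrFun_pos {i j r k : ℕ} (hk : 1 ≤ k) : 1 ≤ biGrFun i j r k := by
  unfold biGrFun; split_ifs <;> omega

lemma entry1_biGr {n i j r k l : ℕ} (hk1 : 1 ≤ k) (hkn : k ≤ n)
    (hl1 : 1 ≤ l) (hln : l ≤ n) :
    entry1 (biGrMatrix n i j r) k l = if biGrFun i j r k = l then 1 else 0 := by
  unfold entry1
  rw [dif_pos ⟨hk1, hkn, hl1, hln⟩]
  show (if biGrFun i j r ((k-1) + 1) = (l-1) + 1 then (1:ℤ) else 0) = _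
  rw [Nat.sub_add_cancel hk1, Nat.sub_add_cancel hl1]

lemma rowPartial_biGr {n i j r k b : ℕ}
    (hk1 : 1 ≤ k) (hkn : k ≤ n) (hbn : b ≤ n) :
    rowPartial (biGrMatrix n i j r) k b
      = if biGrFun i j r k ≤ b then 1 else 0 := by
  unfold rowPartial
  have h1 : ∀ l ∈ Finset.Icc 1 b, entry1 (biGrMatrix n i j r) k l
      = if biGrFun i j r k = l then (1:ℤ) else 0 := by
    intro l hl
    simp only [Finset.mem_Icc] at hl
    exact entry1_biGr hk1 hkn hl.1 (le_trans hl.2 hbn)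
  rw [Finset.sum_congr rfl h1, Finset.sum_ite_eq]
  simp [Finset.mem_Icc, biGrFun_pos hk1]

lemma cornerSum_rows {n} (A : Matrix (Fin n) (Fin n) ℤ) (a b : ℕ) :
    cornerSum A a b = ∑ k ∈ Finset.Icc 1 a, rowPartial A k b := rfl

lemma cornerSum_cols {n} (A : Matrix (Fin n) (Fin n) ℤ) (a b : ℕ) :
    cornerSum A a b = ∑ l ∈ Finset.Icc 1 b, colPartial A a l := by
  unfold cornerSum colPartial; exact Finset.sum_comm

lemma Icc_one (x : ℕ) : Finset.Icc 1 x = Finset.Ioc 0 x := by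
  ext k; simp [Finset.mem_Icc, Finset.mem_Ioc]; omega

lemma biGr_corner {n i j r : ℕ}
    (hr : r < min i j) (hn : i + j ≤ n + r) {b : ℕ} (hb1 : 1 ≤ b) (hbn : b ≤ n) :
    ∀ a, a ≤ n →
      cornerSum (biGrMatrix n i j r) a b
        = min (min (a:ℤ) b) (r + max 0 ((a:ℤ) - i) + max 0 ((b:ℤ) - j)) := by
  intro a
  induction a with
  | zero =>
    intro _
    have : cornerSum (biGrMatrix n i j r) 0 b = 0 := by
      rw [cornerSum_rows]; simp
    rw [this]; omega
  | succ a ih =>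
    intro han
    rw [cornerSum_rows, Finset.sum_Icc_succ_top (by omega), ← cornerSum_rows,
        ih (by omega), rowPartial_biGr (by omega) han hbn]
    by_cases hF : biGrFun i j r (a+1) ≤ b
    · rw [if_pos hF]
      unfold biGrFun at hF
      split_ifs at hF <;> push_cast <;> omega
    · rw [if_neg hF]
      unfold biGrFun at hF
      split_ifs at hF <;> push_cast <;> omega

lemma cornerSum_row_step {n} {A : Matrix (Fin n) (Fin n) ℤ}
    (hA : ∀ k b, rowPartial A k b = 0 ∨ rowPartial A k b = 1)
    {a a' : ℕ} (h : a ≤ a') (b : ℕ) :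
    cornerSum A a b ≤ cornerSum A a' b ∧
      cornerSum A a' b ≤ cornerSum A a b + (a' - a : ℕ) := by
  have key : cornerSum A a b + ∑ k ∈ Finset.Ioc a a', rowPartial A k b
      = cornerSum A a' b := by
    rw [cornerSum_rows, cornerSum_rows, Icc_one, Icc_one]
    exact Finset.sum_Ioc_consecutive _ (Nat.zero_le a) h
  constructor
  · rw [← key]
    have : (0:ℤ) ≤ ∑ k ∈ Finset.Ioc a a', rowPartial A k b :=
      Finset.sum_nonneg fun k _ => by rcases hA k b with h' | h' <;> rw [h'] <;> norm_num
    linarith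
  · rw [← key]
    have : ∑ k ∈ Finset.Ioc a a', rowPartial A k b ≤ ((a' - a : ℕ) : ℤ) := by
      calc ∑ k ∈ Finset.Ioc a a', rowPartial A k b
          ≤ ∑ _k ∈ Finset.Ioc a a', (1:ℤ) :=
            Finset.sum_le_sum fun k _ => by
              rcases hA k b with h' | h' <;> rw [h'] <;> norm_num
        _ = ((a' - a : ℕ) : ℤ) := by simp [Nat.card_Ioc]
    linarith

lemma cornerSum_col_step {n} {A : Matrix (Fin n) (Fin n) ℤ}
    (hA : ∀ a b, colPartial A a b = 0 ∨ colPartial A a b = 1)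
    {b b' : ℕ} (h : b ≤ b') (a : ℕ) :
    cornerSum A a b ≤ cornerSum A a b' ∧
      cornerSum A a b' ≤ cornerSum A a b + (b' - b : ℕ) := by
  have key : cornerSum A a b + ∑ l ∈ Finset.Ioc b b', colPartial A a l
      = cornerSum A a b' := by
    rw [cornerSum_cols, cornerSum_cols, Icc_one, Icc_one]
    exact Finset.sum_Ioc_consecutive _ (Nat.zero_le b) h
  constructor
  · rw [← key]
    have : (0:ℤ) ≤ ∑ l ∈ Finset.Ioc b b', colPartial A a l :=
      Finset.sum_nonneg fun l _ => by rcases hA a l with h' | h' <;> rw [h'] <;> norm_num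
    linarith
  · rw [← key]
    have : ∑ l ∈ Finset.Ioc b b', colPartial A a l ≤ ((b' - b : ℕ) : ℤ) := by
      calc ∑ l ∈ Finset.Ioc b b', colPartial A a l
          ≤ ∑ _l ∈ Finset.Ioc b b', (1:ℤ) :=
            Finset.sum_le_sum fun l _ => by
              rcases hA a l with h' | h' <;> rw [h'] <;> norm_num
        _ = ((b' - b : ℕ) : ℤ) := by simp [Nat.card_Ioc]
    linarith

lemma cornerSum_zero_left {n} (A : Matrix (Fin n) (Fin n) ℤ) (b : ℕ) :
    cornerSum A 0 b = 0 := by rw [cornerSum_rows]; simp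

lemma cornerSum_zero_right {n} (A : Matrix (Fin n) (Fin n) ℤ) (a : ℕ) :
    cornerSum A a 0 = 0 := by rw [cornerSum_cols]; simp

end Stmt4Aux

/-- `[i,j,r]_b` is the minimum of `{A ∈ ASM(n) : r_A(i,j) ≤ r}`
in the ASM order: `r_{[i,j,r]_b}(i,j) = r`, and every ASM `A` with
`r_A(i,j) ≤ r` satisfies `[i,j,r]_b ≤ A`, i.e. `r_A ≤ r_{[i,j,r]_b}`
entrywise. -/
theorem stmt4 {n i j r : ℕ} (hi : 1 ≤ i) (hj : 1 ≤ j)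
    (hr : r < min i j) (hn : i + j ≤ n + r) :
    cornerSum (biGrMatrix n i j r) i j = r ∧
    (∀ A : Matrix (Fin n) (Fin n) ℤ, IsASM A → cornerSum A i j ≤ (r : ℤ) →
      ∀ a b : ℕ, 1 ≤ a → a ≤ n → 1 ≤ b → b ≤ n →
        cornerSum A a b ≤ cornerSum (biGrMatrix n i j r) a b) := by
  have hin : i ≤ n := by omega
  have hjn : j ≤ n := by omega
  constructor
  · rw [Stmt4Aux.biGr_corner hr hn hj hjn i hin]
    omega
  · intro A hA hAr a b ha1 han hb1 hbn
    obtain ⟨hrow, hcol, -, -⟩ := hA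
    have h1 : cornerSum A a b ≤ (a : ℤ) := by
      have := (Stmt4Aux.cornerSum_row_step hrow (Nat.zero_le a) b).2
      rw [Stmt4Aux.cornerSum_zero_left] at this
      omega
    have h2 : cornerSum A a b ≤ (b : ℤ) := by
      have := (Stmt4Aux.cornerSum_col_step hcol (Nat.zero_le b) a).2
      rw [Stmt4Aux.cornerSum_zero_right] at this
      omega
    have h3 : cornerSum A a b ≤ (r : ℤ) + ((a - i : ℕ) : ℤ) + ((b - j : ℕ) : ℤ) := by
      have m1 : cornerSum A a b ≤ cornerSum A (max a i) b :=
        (Stmt4Aux.cornerSum_row_step hrow (le_max_left a i) b).1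
      have m2 : cornerSum A (max a i) b ≤ cornerSum A (max a i) (max b j) :=
        (Stmt4Aux.cornerSum_col_step hcol (le_max_left b j) (max a i)).1
      have m3 : cornerSum A (max a i) (max b j)
          ≤ cornerSum A i (max b j) + ((max a i - i : ℕ) : ℤ) :=
        (Stmt4Aux.cornerSum_row_step hrow (le_max_right a i) (max b j)).2
      have m4 : cornerSum A i (max b j)
          ≤ cornerSum A i j + ((max b j - j : ℕ) : ℤ) :=
        (Stmt4Aux.cornerSum_col_step hcol (le_max_right b j) i).2
      omega
    rw [Stmt4Aux.biGr_corner hr hn hb1 hbn a han]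
    omega
end

section
/- Let A ∈ ASM(n). (1) For every 1 ≤ i,j ≤ n with r_A(i,j) < min(i,j), one has i + j − r_A(i,j) ≤ n, so the biGrassmannian [i, j, r_A(i,j)]_b is a well-defined element of S_n. (2) Defining u_{ij} = [i, j, r_A(i,j)]_b when r_A(i,j) < min(i,j) and u_{ij} = identity when r_A(i,j) = min(i,j), one has A = ∨{u_{ij} : 1 ≤ i,j ≤ n}; equivalently, r_A(a,b) = min over all 1 ≤ i,j ≤ n of r_{u_{ij}}(a,b), for every 1 ≤ a,b ≤ n. -/
section AuxStmt5

open Finset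

lemma biGrFun_pos' {i j r k : ℕ} (hri : r ≤ i) (hk : 1 ≤ k) : 1 ≤ biGrFun i j r k := by
  unfold biGrFun; split_ifs <;> omega

lemma entry1_biGr' {n : ℕ} (i j r k l : ℕ) (hk : 1 ≤ k) (hk' : k ≤ n) (hl : 1 ≤ l)
    (hl' : l ≤ n) :
    entry1 (biGrMatrix n i j r) k l = if biGrFun i j r k = l then 1 else 0 := by
  rw [entry1, dif_pos ⟨hk, hk', hl, hl'⟩]
  simp [biGrMatrix, Nat.sub_add_cancel hk, Nat.sub_add_cancel hl]

lemma biGr_count' {n : ℕ} (i j r a b : ℕ) (hri : r ≤ i) (ha : a ≤ n) (hb : b ≤ n) :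
    cornerSum (biGrMatrix n i j r) a b
      = ∑ k ∈ Finset.Icc 1 a, (if biGrFun i j r k ≤ b then (1:ℤ) else 0) := by
  unfold cornerSum
  refine Finset.sum_congr rfl fun k hk => ?_
  simp only [Finset.mem_Icc] at hk
  calc (∑ l ∈ Finset.Icc 1 b, entry1 (biGrMatrix n i j r) k l)
      = ∑ l ∈ Finset.Icc 1 b, (if biGrFun i j r k = l then (1:ℤ) else 0) := by
        refine Finset.sum_congr rfl fun l hl => ?_
        simp only [Finset.mem_Icc] at hl
        exact entry1_biGr' i j r k l hk.1 (le_trans hk.2 ha) hl.1 (le_trans hl.2 hb)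
    _ = if biGrFun i j r k ∈ Finset.Icc 1 b then (1:ℤ) else 0 := Finset.sum_ite_eq _ _ _
    _ = if biGrFun i j r k ≤ b then (1:ℤ) else 0 := by
        simp [Finset.mem_Icc, biGrFun_pos' hri hk.1]

lemma biGr_count_formula' (i j r : ℕ) (hri : r ≤ i) (hrj : r ≤ j) (a b : ℕ) :
    (∑ k ∈ Finset.Icc 1 a, (if biGrFun i j r k ≤ b then (1:ℤ) else 0))
      = ((min (min a b) (r + (a - i) + (b - j)) : ℕ) : ℤ) := by
  induction a with
  | zero => simp
  | succ a ih =>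
    rw [Finset.sum_Icc_succ_top (by omega : 1 ≤ a + 1), ih]
    unfold biGrFun
    split_ifs <;> omega

lemma cornerSum_row_split' {n : ℕ} (A : Matrix (Fin n) (Fin n) ℤ) (a b : ℕ) :
    cornerSum A (a + 1) b = cornerSum A a b + rowPartial A (a + 1) b := by
  unfold cornerSum rowPartial
  rw [Finset.sum_Icc_succ_top (by omega : 1 ≤ a + 1)]

lemma cornerSum_col_eq' {n : ℕ} (A : Matrix (Fin n) (Fin n) ℤ) (a b : ℕ) :
    cornerSum A a b = ∑ l ∈ Finset.Icc 1 b, colPartial A a l := by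
  unfold cornerSum colPartial
  exact Finset.sum_comm

lemma cornerSum_col_split' {n : ℕ} (A : Matrix (Fin n) (Fin n) ℤ) (a b : ℕ) :
    cornerSum A a (b + 1) = cornerSum A a b + colPartial A a (b + 1) := by
  rw [cornerSum_col_eq', cornerSum_col_eq',
    Finset.sum_Icc_succ_top (by omega : 1 ≤ b + 1)]

lemma cs_row_step' {n : ℕ} (A : Matrix (Fin n) (Fin n) ℤ)
    (hrow : ∀ i j : ℕ, rowPartial A i j = 0 ∨ rowPartial A i j = 1) (b : ℕ) :
    ∀ d a : ℕ, cornerSum A a b ≤ cornerSum A (a + d) b ∧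
      cornerSum A (a + d) b ≤ cornerSum A a b + d := by
  intro d
  induction d with
  | zero => intro a; simp
  | succ d ih =>
    intro a
    obtain ⟨u, v⟩ := ih a
    have h := cornerSum_row_split' A (a + d) b
    have he : a + (d + 1) = (a + d) + 1 := rfl
    rw [he]
    rcases hrow (a + d + 1) b with h0 | h0 <;> constructor <;> omega

lemma cs_col_step' {n : ℕ} (A : Matrix (Fin n) (Fin n) ℤ)
    (hcol : ∀ i j : ℕ, colPartial A i j = 0 ∨ colPartial A i j = 1) (a : ℕ) :
    ∀ d b : ℕ, cornerSum A a b ≤ cornerSum A a (b + d) ∧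
      cornerSum A a (b + d) ≤ cornerSum A a b + d := by
  intro d
  induction d with
  | zero => intro b; simp
  | succ d ih =>
    intro b
    obtain ⟨u, v⟩ := ih b
    have h := cornerSum_col_split' A a (b + d)
    have he : b + (d + 1) = (b + d) + 1 := rfl
    rw [he]
    rcases hcol a (b + d + 1) with h0 | h0 <;> constructor <;> omega

lemma cs_bounds' {n : ℕ} (A : Matrix (Fin n) (Fin n) ℤ)
    (hrow : ∀ i j : ℕ, rowPartial A i j = 0 ∨ rowPartial A i j = 1)
    (hcol : ∀ i j : ℕ, colPartial A i j = 0 ∨ colPartial A i j = 1) (a b : ℕ) :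
    0 ≤ cornerSum A a b ∧ cornerSum A a b ≤ a ∧ cornerSum A a b ≤ b := by
  have hr : cornerSum A a b = ∑ k ∈ Finset.Icc 1 a, rowPartial A k b := rfl
  have hc := cornerSum_col_eq' A a b
  refine ⟨?_, ?_, ?_⟩
  · rw [hr]
    exact Finset.sum_nonneg fun k _ => by rcases hrow k b with h | h <;> omega
  · rw [hr]
    calc (∑ k ∈ Finset.Icc 1 a, rowPartial A k b)
        ≤ ∑ _k ∈ Finset.Icc 1 a, (1:ℤ) :=
          Finset.sum_le_sum fun k _ => by rcases hrow k b with h | h <;> omega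
      _ = a := by rw [Finset.sum_const, Nat.card_Icc, nsmul_eq_mul, mul_one]; push_cast; omega
  · rw [hc]
    calc (∑ l ∈ Finset.Icc 1 b, colPartial A a l)
        ≤ ∑ _l ∈ Finset.Icc 1 b, (1:ℤ) :=
          Finset.sum_le_sum fun l _ => by rcases hcol a l with h | h <;> omega
      _ = b := by rw [Finset.sum_const, Nat.card_Icc, nsmul_eq_mul, mul_one]; push_cast; omega

lemma cs_row_full' {n : ℕ} (A : Matrix (Fin n) (Fin n) ℤ) (hA : IsASM A) :
    ∀ a : ℕ, a ≤ n → cornerSum A a n = a := by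
  intro a
  induction a with
  | zero =>
    intro _
    unfold cornerSum
    rw [Finset.Icc_eq_empty (by omega)]
    simp
  | succ a ih =>
    intro h
    rw [cornerSum_row_split', ih (by omega), hA.2.2.1 (a + 1) (by omega) h]
    push_cast; ring

end AuxStmt5

/-- For an ASM `A`: (1) whenever `r_A(i,j) < min(i,j)` one has
`i + j - r_A(i,j) ≤ n`, so `[i, j, r_A(i,j)]_b` is a well-defined element of
`S_n`; (2) `A` is the join of the biGrassmannians `u_{ij} = [i,j,r_A(i,j)]_b`
(which are the identity when `r_A(i,j) = min(i,j)`, as the defining formula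
then gives the identity): `r_A(a,b)` is the minimum over all `1 ≤ i,j ≤ n` of
`r_{u_{ij}}(a,b)`. -/
theorem stmt5 {n : ℕ} (A : Matrix (Fin n) (Fin n) ℤ) (hA : IsASM A) :
    (∀ i j : ℕ, 1 ≤ i → i ≤ n → 1 ≤ j → j ≤ n →
      cornerSum A i j < min (i : ℤ) (j : ℤ) →
      i + j ≤ n + (cornerSum A i j).toNat) ∧
    (∀ a b : ℕ, 1 ≤ a → a ≤ n → 1 ≤ b → b ≤ n →
      ((∀ i j : ℕ, 1 ≤ i → i ≤ n → 1 ≤ j → j ≤ n →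
          cornerSum A a b ≤
            cornerSum (biGrMatrix n i j (cornerSum A i j).toNat) a b) ∧
       (∃ i j : ℕ, 1 ≤ i ∧ i ≤ n ∧ 1 ≤ j ∧ j ≤ n ∧
          cornerSum (biGrMatrix n i j (cornerSum A i j).toNat) a b =
            cornerSum A a b))) := by
  obtain ⟨hrow, hcol, hfullrow, hfullcol⟩ := hA
  constructor
  · intro i j hi hin hj hjn _
    have h1 : cornerSum A i n = i := cs_row_full' A ⟨hrow, hcol, hfullrow, hfullcol⟩ i hin
    have h2 := (cs_col_step' A hcol i (n - j) j).2
    rw [show j + (n - j) = n from by omega] at h2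
    have h0 := (cs_bounds' A hrow hcol i j).1
    omega
  · intro a b ha han hb hbn
    have key : ∀ i j : ℕ, 1 ≤ i → i ≤ n → 1 ≤ j → j ≤ n →
        cornerSum (biGrMatrix n i j (cornerSum A i j).toNat) a b
          = ((min (min a b) ((cornerSum A i j).toNat + (a - i) + (b - j)) : ℕ) : ℤ) := by
      intro i j hi hin hj hjn
      obtain ⟨h0, h1, h2⟩ := cs_bounds' A hrow hcol i j
      rw [biGr_count' i j _ a b (by omega) han hbn,
        biGr_count_formula' i j _ (by omega) (by omega) a b]
    constructor
    · intro i j hi hin hj hjn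
      rw [key i j hi hin hj hjn]
      obtain ⟨h0, h1, h2⟩ := cs_bounds' A hrow hcol i j
      obtain ⟨g0, g1, g2⟩ := cs_bounds' A hrow hcol a b
      have s1 := (cs_row_step' A hrow b (i - a) a).1
      have s2 := (cs_row_step' A hrow b (a - i) i).2
      rw [show a + (i - a) = i + (a - i) from by omega] at s1
      have t1 := (cs_col_step' A hcol i (j - b) b).1
      have t2 := (cs_col_step' A hcol i (b - j) j).2
      rw [show b + (j - b) = j + (b - j) from by omega] at t1
      omega
    · refine ⟨a, b, ha, han, hb, hbn, ?_⟩
      rw [key a b ha han hb hbn]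
      obtain ⟨h0, h1, h2⟩ := cs_bounds' A hrow hcol a b
      omega
end

section
/- Let A ∈ ASM(n). The set {[i, j, r_A(i,j)]_b : (i,j) ∈ Ess(A)} is an antichain in the Bruhat order: for any (i,j), (i',j') ∈ Ess(A), the permutations [i, j, r_A(i,j)]_b and [i', j', r_A(i',j')]_b are either equal or incomparable. -/
set_option linter.unusedSectionVars false
set_option linter.unusedVariables false
set_option linter.unnecessarySeqFocus false

namespace S8
open Finset
variable {n : ℕ} (A : Matrix (Fin n) (Fin n) ℤ)

lemma cs_row (a b : ℕ) : cornerSum A a b = ∑ k ∈ Icc 1 a, rowPartial A k b := rfl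
lemma cs_col (a b : ℕ) : cornerSum A a b = ∑ l ∈ Icc 1 b, colPartial A a l :=
  Finset.sum_comm
lemma cs_succ_row (a b : ℕ) :
    cornerSum A (a+1) b = cornerSum A a b + rowPartial A (a+1) b := by
  rw [cs_row, cs_row, Finset.sum_Icc_succ_top (by omega)]
lemma cs_succ_col (a b : ℕ) :
    cornerSum A a (b+1) = cornerSum A a b + colPartial A a (b+1) := by
  rw [cs_col, cs_col, Finset.sum_Icc_succ_top (by omega)]
lemma cs_zero_row (b : ℕ) : cornerSum A 0 b = 0 := by simp [cornerSum]
lemma cs_zero_col (a : ℕ) : cornerSum A a 0 = 0 := by simp [cornerSum]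

variable (hA : IsASM A)
include hA

lemma cs_row_lip {a a' : ℕ} (h : a ≤ a') (b : ℕ) :
    cornerSum A a b ≤ cornerSum A a' b ∧
      cornerSum A a' b ≤ cornerSum A a b + ((a' - a : ℕ) : ℤ) := by
  induction a', h using Nat.le_induction with
  | base => simp
  | succ m hm ih =>
    have e := cs_succ_row A m b
    rcases hA.1 (m+1) b with h0 | h0 <;>
    · rw [h0] at e
      constructor <;> [omega; (push_cast; omega)]

lemma cs_col_lip {b b' : ℕ} (h : b ≤ b') (a : ℕ) :
    cornerSum A a b ≤ cornerSum A a b' ∧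
      cornerSum A a b' ≤ cornerSum A a b + ((b' - b : ℕ) : ℤ) := by
  induction b', h using Nat.le_induction with
  | base => simp
  | succ m hm ih =>
    have e := cs_succ_col A a m
    rcases hA.2.1 a (m+1) with h0 | h0 <;>
    · rw [h0] at e
      constructor <;> [omega; (push_cast; omega)]

/-- combined monotone/Lipschitz bound, valid for all indices. -/
lemma cs_lip (a b a' b' : ℕ) :
    cornerSum A a b ≤ cornerSum A a' b' + ((a - a' : ℕ) : ℤ) + ((b - b' : ℕ) : ℤ) := by
  have h1 := (cs_row_lip A hA (Nat.le_max_left a a') b).1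
  have h2 := (cs_col_lip A hA (Nat.le_max_left b b') (max a a')).1
  have h3 := (cs_row_lip A hA (Nat.le_max_right a a') (max b b')).2
  have h4 := (cs_col_lip A hA (Nat.le_max_right b b') a').2
  have e1 : (max a a' - a' : ℕ) = a - a' := by omega
  have e2 : (max b b' - b' : ℕ) = b - b' := by omega
  rw [e1] at h3; rw [e2] at h4
  omega

lemma cs_nonneg (a b : ℕ) : 0 ≤ cornerSum A a b := by
  have := (cs_col_lip A hA (Nat.zero_le b) a).1
  have := cs_zero_col A a
  omega

lemma cs_le_fst (a b : ℕ) : cornerSum A a b ≤ (a : ℤ) := by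
  have := cs_lip A hA a b 0 b
  have := cs_zero_row A b
  simp at *
  omega

lemma cs_le_snd (a b : ℕ) : cornerSum A a b ≤ (b : ℤ) := by
  have := cs_lip A hA a b a 0
  have := cs_zero_col A a
  simp at *
  omega

lemma cs_row_full {b : ℕ} (hb : b ≤ n) : cornerSum A n b = (b : ℤ) := by
  induction b with
  | zero => simpa using cs_zero_col A n
  | succ m ih =>
    have e := cs_succ_col A n m
    have h0 := hA.2.2.2 (m+1) (by omega) hb
    rw [h0] at e
    rw [ih (by omega)] at e
    push_cast
    omega

lemma cs_col_full {a : ℕ} (ha : a ≤ n) : cornerSum A a n = (a : ℤ) := by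
  induction a with
  | zero => simpa using cs_zero_row A n
  | succ m ih =>
    have e := cs_succ_row A m n
    have h0 := hA.2.2.1 (m+1) (by omega) ha
    rw [h0] at e
    rw [ih (by omega)] at e
    push_cast
    omega

end S8


namespace S8
open Finset
variable {n : ℕ} (A : Matrix (Fin n) (Fin n) ℤ)

lemma entry1_zero {i j : ℕ} (h : ¬(1 ≤ i ∧ i ≤ n ∧ 1 ≤ j ∧ j ≤ n)) :
    entry1 A i j = 0 := by
  rw [entry1, dif_neg h]

lemma sum_tail_row {i j : ℕ} (hj : j ≤ n) :
    ∑ l ∈ Icc 1 n, (if j < l then entry1 A i l else 0)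
      = rowPartial A i n - rowPartial A i j := by
  have h1 : ∑ l ∈ Icc 1 n, (if j < l then entry1 A i l else 0)
      = ∑ l ∈ Ioc j n, entry1 A i l := by
    rw [Finset.sum_ite, Finset.sum_const_zero, add_zero]
    apply Finset.sum_congr _ (fun _ _ => rfl)
    ext x
    simp only [mem_filter, mem_Icc, mem_Ioc]
    omega
  rw [h1]
  have h2 : rowPartial A i n = rowPartial A i j + ∑ l ∈ Ioc j n, entry1 A i l := by
    rw [rowPartial, rowPartial]
    rw [show Icc 1 n = Ioc 0 n from by ext x; simp [mem_Icc, mem_Ioc]; omega]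
    rw [show Icc 1 j = Ioc 0 j from by ext x; simp [mem_Icc, mem_Ioc]; omega]
    rw [← Finset.sum_Ioc_consecutive _ (Nat.zero_le j) hj]
  omega

lemma sum_tail_col {i j : ℕ} (hi : i ≤ n) :
    ∑ k ∈ Icc 1 n, (if i < k then entry1 A k j else 0)
      = colPartial A n j - colPartial A i j := by
  have h1 : ∑ k ∈ Icc 1 n, (if i < k then entry1 A k j else 0)
      = ∑ k ∈ Ioc i n, entry1 A k j := by
    rw [Finset.sum_ite, Finset.sum_const_zero, add_zero]
    apply Finset.sum_congr _ (fun _ _ => rfl)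
    ext x
    simp only [mem_filter, mem_Icc, mem_Ioc]
    omega
  rw [h1]
  have h2 : colPartial A n j = colPartial A i j + ∑ k ∈ Ioc i n, entry1 A k j := by
    rw [colPartial, colPartial]
    rw [show Icc 1 n = Ioc 0 n from by ext x; simp [mem_Icc, mem_Ioc]; omega]
    rw [show Icc 1 i = Ioc 0 i from by ext x; simp [mem_Icc, mem_Ioc]; omega]
    rw [← Finset.sum_Ioc_consecutive _ (Nat.zero_le i) hi]
  omega

lemma inDiagram_prod (i j : ℕ) :
    (∑ k ∈ Finset.Icc 1 n, ∑ l ∈ Finset.Icc 1 n,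
      (if i < k ∧ j < l then entry1 A i l * entry1 A k j else 0))
    = (∑ l ∈ Icc 1 n, (if j < l then entry1 A i l else 0)) *
        (∑ k ∈ Icc 1 n, (if i < k then entry1 A k j else 0)) := by
  have step : ∀ k l : ℕ, (if i < k ∧ j < l then entry1 A i l * entry1 A k j else 0)
      = (if j < l then entry1 A i l else 0) * (if i < k then entry1 A k j else 0) := by
    intro k l
    by_cases h1 : i < k <;> by_cases h2 : j < l <;> simp [h1, h2]
  simp_rw [step, ← Finset.sum_mul, ← Finset.mul_sum]

lemma inDiagram_iff (hA : IsASM A) (i j : ℕ) :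
    InDiagram A i j ↔ 1 ≤ i ∧ i ≤ n ∧ 1 ≤ j ∧ j ≤ n ∧
      rowPartial A i j = 0 ∧ colPartial A i j = 0 := by
  rw [InDiagram, inDiagram_prod]
  by_cases hi : 1 ≤ i ∧ i ≤ n
  · by_cases hj : 1 ≤ j ∧ j ≤ n
    · rw [sum_tail_row A hj.2, sum_tail_col A hi.2]
      rw [hA.2.2.1 i hi.1 hi.2, hA.2.2.2 j hj.1 hj.2]
      rcases hA.1 i j with h1 | h1 <;> rcases hA.2.1 i j with h2 | h2 <;>
        rw [h1, h2] <;> norm_num <;> omega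
    · have hz : ∀ k ∈ Icc 1 n, (if i < k then entry1 A k j else 0) = 0 := by
        intro k hk
        split_ifs with h
        · exact entry1_zero A (by omega)
        · rfl
      rw [Finset.sum_congr rfl hz]
      simp
      omega
  · have hz : ∀ l ∈ Icc 1 n, (if j < l then entry1 A i l else 0) = 0 := by
      intro l hl
      split_ifs with h
      · exact entry1_zero A (by omega)
      · rfl
    rw [Finset.sum_congr rfl hz]
    simp
    omega

end S8


namespace S8
open Finset

variable {n i j r : ℕ}

lemma entry1_biGr (k l : ℕ) :
    entry1 (biGrMatrix n i j r) k l =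
      if 1 ≤ k ∧ k ≤ n ∧ 1 ≤ l ∧ l ≤ n ∧ biGrFun i j r k = l then 1 else 0 := by
  by_cases h : 1 ≤ k ∧ k ≤ n ∧ 1 ≤ l ∧ l ≤ n
  · rw [entry1, dif_pos h]
    simp only [biGrMatrix, Matrix.of_apply]
    have hk : k - 1 + 1 = k := by omega
    have hl : l - 1 + 1 = l := by omega
    rw [hk, hl]
    by_cases hg : biGrFun i j r k = l
    · rw [if_pos hg, if_pos ⟨h.1, h.2.1, h.2.2.1, h.2.2.2, hg⟩]
    · rw [if_neg hg, if_neg (by tauto)]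
  · rw [entry1, dif_neg h, if_neg (by tauto)]

lemma rowPartial_biGr (k b : ℕ) (hb : b ≤ n) :
    rowPartial (biGrMatrix n i j r) k b =
      if 1 ≤ k ∧ k ≤ n ∧ 1 ≤ biGrFun i j r k ∧ biGrFun i j r k ≤ b then 1 else 0 := by
  rw [rowPartial]
  rw [Finset.sum_congr rfl (fun l _ => entry1_biGr k l)]
  by_cases hk : 1 ≤ k ∧ k ≤ n
  · have hcong : ∀ l ∈ Icc 1 b,
        (if 1 ≤ k ∧ k ≤ n ∧ 1 ≤ l ∧ l ≤ n ∧ biGrFun i j r k = l then (1:ℤ) else 0)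
          = if biGrFun i j r k = l then 1 else 0 := by
      intro l hl
      simp only [mem_Icc] at hl
      by_cases hg : biGrFun i j r k = l
      · rw [if_pos hg, if_pos ⟨hk.1, hk.2, hl.1, by omega, hg⟩]
      · rw [if_neg hg, if_neg (by tauto)]
    rw [Finset.sum_congr rfl hcong, Finset.sum_ite_eq]
    simp only [mem_Icc]
    by_cases hg : 1 ≤ biGrFun i j r k ∧ biGrFun i j r k ≤ b
    · rw [if_pos hg, if_pos ⟨hk.1, hk.2, hg.1, hg.2⟩]
    · rw [if_neg hg, if_neg (by tauto)]
  · have hz : ∀ l ∈ Icc 1 b,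
        (if 1 ≤ k ∧ k ≤ n ∧ 1 ≤ l ∧ l ≤ n ∧ biGrFun i j r k = l then (1:ℤ) else 0) = 0 := by
      intro l _
      rw [if_neg (by tauto)]
    rw [Finset.sum_congr rfl hz, Finset.sum_const_zero, if_neg (by tauto)]

variable (hri : r < i) (hrj : r < j) (hin : i ≤ n) (hjn : j ≤ n)
  (hsum : i + j ≤ n + r)
include hri hrj hin hjn hsum

lemma biGr_step {a b : ℕ} (ha : a + 1 ≤ n) (hb : b ≤ n) :
    min (min (a+1) b) (r + (a+1-i) + (b-j)) =
      min (min a b) (r + (a-i) + (b-j)) +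
        (if 1 ≤ biGrFun i j r (a+1) ∧ biGrFun i j r (a+1) ≤ b then 1 else 0) := by
  unfold biGrFun
  split_ifs <;> omega

lemma cornerSum_biGr {a b : ℕ} (ha : a ≤ n) (hb : b ≤ n) :
    cornerSum (biGrMatrix n i j r) a b
      = ((min (min a b) (r + (a - i) + (b - j)) : ℕ) : ℤ) := by
  induction a with
  | zero => simp [cs_zero_row]
  | succ m ih =>
    rw [cs_succ_row, rowPartial_biGr _ _ hb, ih (by omega)]
    by_cases hcond : 1 ≤ biGrFun i j r (m+1) ∧ biGrFun i j r (m+1) ≤ b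
    · rw [if_pos ⟨by omega, by omega, hcond.1, hcond.2⟩]
      have hstep := biGr_step hri hrj hin hjn hsum ha hb
      rw [if_pos hcond] at hstep
      omega
    · rw [if_neg (by tauto)]
      have hstep := biGr_step hri hrj hin hjn hsum ha hb
      rw [if_neg hcond] at hstep
      omega

end S8


namespace S8
open Finset

variable {n : ℕ} {A : Matrix (Fin n) (Fin n) ℤ}

lemma ess_facts (hA : IsASM A) {i j : ℕ} (h : InEss A i j) :
    1 ≤ i ∧ i ≤ n ∧ 1 ≤ j ∧ j ≤ n ∧ rowPartial A i j = 0 ∧ colPartial A i j = 0 :=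
  (inDiagram_iff A hA i j).mp h.1

lemma key (hA : IsASM A) {i j i' j' : ℕ} (h1 : InEss A i j) (h2 : InEss A i' j')
    (hle : ∀ a b : ℕ, cornerSum (biGrMatrix n i' j' (cornerSum A i' j').toNat) a b ≤
      cornerSum (biGrMatrix n i j (cornerSum A i j).toNat) a b) :
    i = i' ∧ j = j' := by
  obtain ⟨hi1, hin, hj1, hjn, hrp, hcp⟩ := ess_facts hA h1
  obtain ⟨hi1', hin', hj1', hjn', hrp', hcp'⟩ := ess_facts hA h2
  set r := (cornerSum A i j).toNat with hrdef
  set r' := (cornerSum A i' j').toNat with hrdef'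
  have hnn := cs_nonneg A hA i j
  have hnn' := cs_nonneg A hA i' j'
  have hr : (r : ℤ) = cornerSum A i j := Int.toNat_of_nonneg hnn
  have hr' : (r' : ℤ) = cornerSum A i' j' := Int.toNat_of_nonneg hnn'
  -- r < i
  have e1 : cornerSum A i j = cornerSum A (i-1) j + rowPartial A i j := by
    have h := cs_succ_row A (i-1) j
    rwa [show i - 1 + 1 = i from by omega] at h
  have e2 : cornerSum A i j = cornerSum A i (j-1) + colPartial A i j := by
    have h := cs_succ_col A i (j-1)
    rwa [show j - 1 + 1 = j from by omega] at h
  have e1' : cornerSum A i' j' = cornerSum A (i'-1) j' + rowPartial A i' j' := by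
    have h := cs_succ_row A (i'-1) j'
    rwa [show i' - 1 + 1 = i' from by omega] at h
  have e2' : cornerSum A i' j' = cornerSum A i' (j'-1) + colPartial A i' j' := by
    have h := cs_succ_col A i' (j'-1)
    rwa [show j' - 1 + 1 = j' from by omega] at h
  have hri : r < i := by
    have := cs_le_fst A hA (i-1) j
    omega
  have hrj : r < j := by
    have := cs_le_snd A hA i (j-1)
    omega
  have hri' : r' < i' := by
    have := cs_le_fst A hA (i'-1) j'
    omega
  have hrj' : r' < j' := by
    have := cs_le_snd A hA i' (j'-1)
    omega
  have hsum : i + j ≤ n + r := by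
    have hf := cs_row_full A hA hjn
    have hl := cs_lip A hA n j i j
    omega
  have hsum' : i' + j' ≤ n + r' := by
    have hf := cs_row_full A hA hjn'
    have hl := cs_lip A hA n j' i' j'
    omega
  -- the key inequality at (i, j)
  have hu : cornerSum (biGrMatrix n i j r) i j
      = ((min (min i j) (r + (i - i) + (j - j)) : ℕ) : ℤ) :=
    cornerSum_biGr hri hrj hin hjn hsum hin hjn
  have hu' : cornerSum (biGrMatrix n i' j' r') i j
      = ((min (min i j) (r' + (i - i') + (j - j')) : ℕ) : ℤ) :=
    cornerSum_biGr hri' hrj' hin' hjn' hsum' hin hjn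
  have hkey := hle i j
  rw [hu, hu'] at hkey
  have hE : r' + (i - i') + (j - j') ≤ r := by omega
  -- j' < j is impossible
  have hjj : j ≤ j' := by
    by_contra hcon
    push_neg at hcon
    have l1 := cs_lip A hA i (j-1) i' j'
    omega
  -- i' < i is impossible
  have hii : i ≤ i' := by
    by_contra hcon
    push_neg at hcon
    have l1 := cs_lip A hA (i-1) j i' j'
    omega
  have hrr : r = r' := by
    have l1 := cs_lip A hA i j i' j'
    omega
  have hii2 : i = i' := by
    by_contra hcon
    have hlt : i < i' := by omega
    have hX : InDiagram A (i+1) j := by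
      rw [inDiagram_iff A hA]
      refine ⟨by omega, by omega, hj1, hjn, ?_, ?_⟩
      · have s1 := cs_succ_row A i j
        have m1 := cs_lip A hA (i+1) j i' j'
        have m2 := cs_lip A hA i j (i+1) j
        omega
      · have s1 := cs_succ_row A i j
        have m1 := cs_lip A hA (i+1) j i' j'
        have m2 := cs_lip A hA i j (i+1) j
        have s2 : cornerSum A (i+1) j
            = cornerSum A (i+1) (j-1) + colPartial A (i+1) j := by
          have h := cs_succ_col A (i+1) (j-1)
          rwa [show j - 1 + 1 = j from by omega] at h
        have m3 := cs_lip A hA i (j-1) (i+1) (j-1)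
        have m4 := cs_lip A hA (i+1) (j-1) (i+1) j
        omega
    exact h1.2.1 hX
  have hjj2 : j = j' := by
    by_contra hcon
    have hlt : j < j' := by omega
    have hX : InDiagram A i (j+1) := by
      rw [inDiagram_iff A hA]
      refine ⟨hi1, hin, by omega, by omega, ?_, ?_⟩
      · have s1 : cornerSum A i (j+1)
            = cornerSum A (i-1) (j+1) + rowPartial A i (j+1) := by
          have h := cs_succ_row A (i-1) (j+1)
          rwa [show i - 1 + 1 = i from by omega] at h
        have m1 := cs_lip A hA i (j+1) i' j'
        have m2 := cs_lip A hA i j i (j+1)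
        have m3 := cs_lip A hA (i-1) j (i-1) (j+1)
        have m4 := cs_lip A hA (i-1) (j+1) i (j+1)
        omega
      · have s2 := cs_succ_col A i j
        have m1 := cs_lip A hA i (j+1) i' j'
        have m2 := cs_lip A hA i j i (j+1)
        omega
    exact h1.2.2 hX
  exact ⟨hii2, hjj2⟩

end S8

/-- For an ASM `A`, the set
`{[i, j, r_A(i,j)]_b : (i,j) ∈ Ess(A)}` is an antichain in Bruhat order: any
two of its members are equal or incomparable (where `u ≤ v` in Bruhat order
means `r_u ≥ r_v` entrywise on corner sums). -/
theorem stmt8 {n : ℕ} (A : Matrix (Fin n) (Fin n) ℤ) (hA : IsASM A)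
    (i j i' j' : ℕ) (h1 : InEss A i j) (h2 : InEss A i' j') :
    biGrMatrix n i j (cornerSum A i j).toNat =
      biGrMatrix n i' j' (cornerSum A i' j').toNat ∨
    ((¬ ∀ a b : ℕ,
        cornerSum (biGrMatrix n i' j' (cornerSum A i' j').toNat) a b ≤
          cornerSum (biGrMatrix n i j (cornerSum A i j).toNat) a b) ∧
     (¬ ∀ a b : ℕ,
        cornerSum (biGrMatrix n i j (cornerSum A i j).toNat) a b ≤
          cornerSum (biGrMatrix n i' j' (cornerSum A i' j').toNat) a b)) := by
  by_cases hc : i = i' ∧ j = j'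
  · left
    obtain ⟨h, h'⟩ := hc
    subst h; subst h'
    rfl
  · right
    constructor
    · intro hall
      exact hc (S8.key hA h1 h2 hall)
    · intro hall
      have h := S8.key hA h2 h1 hall
      exact hc ⟨h.1.symm, h.2.symm⟩
end

section
/- Let A ∈ ASM(n) with A not the identity matrix. Then A is the join of the biGrassmannians indexed by its essential set: for all 1 ≤ a,b ≤ n, r_A(a,b) = min over (i,j) ∈ Ess(A) of r_{[i, j, r_A(i,j)]_b}(a,b). In particular, A is uniquely determined by the restriction of its corner sum function to Ess(A). -/
namespace Stmt9

variable {n : ℕ} (A : Matrix (Fin n) (Fin n) ℤ)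

lemma entry1_out {i j : ℕ} (h : ¬(1 ≤ i ∧ i ≤ n ∧ 1 ≤ j ∧ j ≤ n)) :
    entry1 A i j = 0 := by
  unfold entry1; rw [dif_neg h]

lemma rowPartial_succ (i j : ℕ) :
    rowPartial A i (j + 1) = rowPartial A i j + entry1 A i (j + 1) :=
  Finset.sum_Icc_succ_top (by omega) _

lemma colPartial_succ (i j : ℕ) :
    colPartial A (i + 1) j = colPartial A i j + entry1 A (i + 1) j :=
  Finset.sum_Icc_succ_top (by omega) _

lemma rowPartial_zero (j : ℕ) : rowPartial A 0 j = 0 := by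
  unfold rowPartial
  refine Finset.sum_eq_zero fun l _ => entry1_out A (by omega)

lemma colPartial_zero (i : ℕ) : colPartial A i 0 = 0 := by
  unfold colPartial
  refine Finset.sum_eq_zero fun k _ => entry1_out A (by omega)

lemma csum_rows (i j : ℕ) :
    cornerSum A i j = ∑ k ∈ Finset.Icc 1 i, rowPartial A k j := rfl

lemma csum_cols (i j : ℕ) :
    cornerSum A i j = ∑ l ∈ Finset.Icc 1 j, colPartial A i l :=
  Finset.sum_comm

lemma csum_row_succ (i j : ℕ) :
    cornerSum A (i + 1) j = cornerSum A i j + rowPartial A (i + 1) j := by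
  rw [csum_rows, csum_rows]
  exact Finset.sum_Icc_succ_top (by omega) _

lemma csum_col_succ (i j : ℕ) :
    cornerSum A i (j + 1) = cornerSum A i j + colPartial A i (j + 1) := by
  rw [csum_cols, csum_cols]
  exact Finset.sum_Icc_succ_top (by omega) _

lemma csum_zero_row (j : ℕ) : cornerSum A 0 j = 0 := by
  simp [cornerSum]

lemma csum_zero_col (i : ℕ) : cornerSum A i 0 = 0 := by
  simp [cornerSum]


variable {A}

lemma csum_mono_row (hA : IsASM A) {i i' : ℕ} (j : ℕ) (h : i ≤ i') :
    cornerSum A i j ≤ cornerSum A i' j := by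
  induction i', h using Nat.le_induction with
  | base => exact le_refl _
  | succ k hk ih =>
    rw [csum_row_succ]
    rcases hA.1 (k + 1) j with h0 | h1 <;> omega

lemma csum_mono_col (hA : IsASM A) (i : ℕ) {j j' : ℕ} (h : j ≤ j') :
    cornerSum A i j ≤ cornerSum A i j' := by
  induction j', h using Nat.le_induction with
  | base => exact le_refl _
  | succ k hk ih =>
    rw [csum_col_succ]
    rcases hA.2.1 i (k + 1) with h0 | h1 <;> omega

lemma csum_lip_row (hA : IsASM A) {i i' : ℕ} (j : ℕ) (h : i ≤ i') :
    cornerSum A i' j ≤ cornerSum A i j + (i' - i : ℕ) := by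
  induction i', h using Nat.le_induction with
  | base => simp
  | succ k hk ih =>
    rw [csum_row_succ]
    rcases hA.1 (k + 1) j with h0 | h1 <;> push_cast <;> omega

lemma csum_lip_col (hA : IsASM A) (i : ℕ) {j j' : ℕ} (h : j ≤ j') :
    cornerSum A i j' ≤ cornerSum A i j + (j' - j : ℕ) := by
  induction j', h using Nat.le_induction with
  | base => simp
  | succ k hk ih =>
    rw [csum_col_succ]
    rcases hA.2.1 i (k + 1) with h0 | h1 <;> push_cast <;> omega

lemma csum_nonneg (hA : IsASM A) (i j : ℕ) : 0 ≤ cornerSum A i j := by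
  have := csum_mono_row hA j (Nat.zero_le i)
  rwa [csum_zero_row] at this

lemma csum_le_fst (hA : IsASM A) (i j : ℕ) : cornerSum A i j ≤ (i : ℤ) := by
  have := csum_lip_row hA (i := 0) (i' := i) j (Nat.zero_le i)
  rw [csum_zero_row] at this; simpa using this

lemma csum_le_snd (hA : IsASM A) (i j : ℕ) : cornerSum A i j ≤ (j : ℤ) := by
  have := csum_lip_col hA (j := 0) (j' := j) i (Nat.zero_le j)
  rw [csum_zero_col] at this; simpa using this

lemma csum_row_full (hA : IsASM A) {i : ℕ} (hi : i ≤ n) :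
    cornerSum A i n = i := by
  induction i with
  | zero => simp [csum_zero_row]
  | succ k ih =>
    rw [csum_row_succ, ih (by omega), hA.2.2.1 (k + 1) (by omega) hi]
    push_cast; ring

lemma csum_col_full (hA : IsASM A) {j : ℕ} (hj : j ≤ n) :
    cornerSum A n j = j := by
  induction j with
  | zero => simp [csum_zero_col]
  | succ k ih =>
    rw [csum_col_succ, ih (by omega), hA.2.2.2 (k + 1) (by omega) hj]
    push_cast; ring


lemma rowPartial_out {i : ℕ} (j : ℕ) (h : ¬(1 ≤ i ∧ i ≤ n)) :
    rowPartial A i j = 0 :=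
  Finset.sum_eq_zero fun l _ => entry1_out A (by omega)

lemma colPartial_out (i : ℕ) {j : ℕ} (h : ¬(1 ≤ j ∧ j ≤ n)) :
    colPartial A i j = 0 :=
  Finset.sum_eq_zero fun k _ => entry1_out A (by omega)

lemma rowPartial_min (i j : ℕ) :
    rowPartial A i j = rowPartial A i (min j n) := by
  unfold rowPartial
  refine (Finset.sum_subset (Finset.Icc_subset_Icc le_rfl (by omega))
    fun l hl hl' => ?_).symm
  simp only [Finset.mem_Icc] at hl hl'
  exact entry1_out A (by omega)

lemma colPartial_min (i j : ℕ) :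
    colPartial A i j = colPartial A (min i n) j := by
  unfold colPartial
  refine (Finset.sum_subset (Finset.Icc_subset_Icc le_rfl (by omega))
    fun k hk hk' => ?_).symm
  simp only [Finset.mem_Icc] at hk hk'
  exact entry1_out A (by omega)

lemma row_tail (i j : ℕ) :
    (∑ l ∈ Finset.Icc 1 n, if j < l then entry1 A i l else 0)
      = rowPartial A i n - rowPartial A i j := by
  have h1 : rowPartial A i n
      = (∑ l ∈ Finset.Icc 1 n, if j < l then entry1 A i l else 0)
        + (∑ l ∈ Finset.Icc 1 n, if l ≤ j then entry1 A i l else 0) := by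
    rw [← Finset.sum_add_distrib]
    refine Finset.sum_congr rfl fun l _ => ?_
    split_ifs <;> first | omega | ring
  have h2 : (∑ l ∈ Finset.Icc 1 n, if l ≤ j then entry1 A i l else 0)
      = rowPartial A i j := by
    rw [rowPartial_min (A := A) i j, ← Finset.sum_filter]
    unfold rowPartial
    congr 1
    ext l
    simp only [Finset.mem_filter, Finset.mem_Icc]
    omega
  rw [h2] at h1
  omega

lemma col_tail (i j : ℕ) :
    (∑ k ∈ Finset.Icc 1 n, if i < k then entry1 A k j else 0)
      = colPartial A n j - colPartial A i j := by
  have h1 : colPartial A n j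
      = (∑ k ∈ Finset.Icc 1 n, if i < k then entry1 A k j else 0)
        + (∑ k ∈ Finset.Icc 1 n, if k ≤ i then entry1 A k j else 0) := by
    rw [← Finset.sum_add_distrib]
    refine Finset.sum_congr rfl fun k _ => ?_
    split_ifs <;> first | omega | ring
  have h2 : (∑ k ∈ Finset.Icc 1 n, if k ≤ i then entry1 A k j else 0)
      = colPartial A i j := by
    rw [colPartial_min (A := A) i j, ← Finset.sum_filter]
    unfold colPartial
    congr 1
    ext k
    simp only [Finset.mem_filter, Finset.mem_Icc]
    omega
  rw [h2] at h1
  omega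

lemma diag_iff (hA : IsASM A) (i j : ℕ) :
    InDiagram A i j ↔
      1 ≤ i ∧ i ≤ n ∧ 1 ≤ j ∧ j ≤ n ∧
        rowPartial A i j = 0 ∧ colPartial A i j = 0 := by
  unfold InDiagram
  have key : (∑ k ∈ Finset.Icc 1 n, ∑ l ∈ Finset.Icc 1 n,
        if i < k ∧ j < l then entry1 A i l * entry1 A k j else 0)
      = (∑ k ∈ Finset.Icc 1 n, if i < k then entry1 A k j else 0)
        * (∑ l ∈ Finset.Icc 1 n, if j < l then entry1 A i l else 0) := by
    rw [Finset.sum_mul_sum]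
    refine Finset.sum_congr rfl fun k _ => Finset.sum_congr rfl fun l _ => ?_
    by_cases h1 : i < k <;> by_cases h2 : j < l <;>
      simp [h1, h2, mul_comm]
  rw [key, col_tail, row_tail]
  by_cases hi : 1 ≤ i ∧ i ≤ n
  · by_cases hj : 1 ≤ j ∧ j ≤ n
    · rw [hA.2.2.2 j hj.1 hj.2, hA.2.2.1 i hi.1 hi.2]
      rcases hA.1 i j with h1 | h1 <;> rcases hA.2.1 i j with h2 | h2 <;>
        rw [h1, h2] <;> norm_num <;>
        exact ⟨hi.1, hi.2, hj.1, hj.2⟩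
    · rw [colPartial_out (A := A) n hj, colPartial_out (A := A) i hj]
      simp only [sub_self, zero_mul]
      constructor
      · intro h; exact absurd h (by norm_num)
      · rintro ⟨-, -, h1, h2, -⟩; exact absurd ⟨h1, h2⟩ hj
  · rw [rowPartial_out (A := A) n hi, rowPartial_out (A := A) j hi]
    simp only [sub_self, mul_zero]
    constructor
    · intro h; exact absurd h (by norm_num)
    · rintro ⟨h1, h2, -⟩; exact absurd ⟨h1, h2⟩ hi


lemma biGrFun_range {i j r : ℕ} (hri : r < i) (hrj : r < j)
    (hijn : i + j ≤ n + r) {a : ℕ} (ha1 : 1 ≤ a) (han : a ≤ n) :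
    1 ≤ biGrFun i j r a ∧ biGrFun i j r a ≤ n := by
  unfold biGrFun; split_ifs <;> omega

lemma entry1_biGr (i j r : ℕ) {k l : ℕ} (hk1 : 1 ≤ k) (hk2 : k ≤ n)
    (hl1 : 1 ≤ l) (hl2 : l ≤ n) :
    entry1 (biGrMatrix n i j r) k l = if biGrFun i j r k = l then 1 else 0 := by
  unfold entry1 biGrMatrix
  rw [dif_pos ⟨hk1, hk2, hl1, hl2⟩]
  simp only [Matrix.of_apply]
  have e1 : k - 1 + 1 = k := by omega
  have e2 : l - 1 + 1 = l := by omega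
  simp [e1, e2]

lemma rowPartial_biGr {i j r : ℕ} (hri : r < i) (hrj : r < j)
    (hijn : i + j ≤ n + r) {k : ℕ} (b : ℕ) (hk1 : 1 ≤ k) (hk : k ≤ n)
    (hb : b ≤ n) :
    rowPartial (biGrMatrix n i j r) k b
      = if biGrFun i j r k ≤ b then 1 else 0 := by
  obtain ⟨hf1, hfn⟩ := biGrFun_range hri hrj hijn hk1 hk
  unfold rowPartial
  have step : ∀ l ∈ Finset.Icc 1 b, entry1 (biGrMatrix n i j r) k l
      = if biGrFun i j r k = l then 1 else 0 := by
    intro l hl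
    simp only [Finset.mem_Icc] at hl
    exact entry1_biGr i j r hk1 hk hl.1 (by omega)
  rw [Finset.sum_congr rfl step, Finset.sum_ite_eq]
  simp only [Finset.mem_Icc]
  by_cases h : biGrFun i j r k ≤ b
  · rw [if_pos ⟨hf1, h⟩, if_pos h]
  · rw [if_neg (by omega), if_neg h]

lemma min_step {i j r : ℕ} (hri : r < i) (hrj : r < j)
    (hijn : i + j ≤ n + r) {a b : ℕ} (ha : a + 1 ≤ n) (hb : b ≤ n) :
    min (a + 1) (min b (r + (a + 1 - i) + (b - j)))
      = min a (min b (r + (a - i) + (b - j)))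
        + (if biGrFun i j r (a + 1) ≤ b then 1 else 0) := by
  unfold biGrFun; split_ifs <;> omega

lemma csum_biGr {i j r : ℕ} (hri : r < i) (hrj : r < j)
    (hijn : i + j ≤ n + r) {a b : ℕ} (ha : a ≤ n) (hb : b ≤ n) :
    cornerSum (biGrMatrix n i j r) a b
      = ((min a (min b (r + (a - i) + (b - j))) : ℕ) : ℤ) := by
  induction a with
  | zero => simp [csum_zero_row]
  | succ k ih =>
    rw [csum_row_succ, ih (by omega),
      rowPartial_biGr hri hrj hijn b (by omega) ha hb,
      min_step hri hrj hijn ha hb]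
    split_ifs <;> push_cast <;> ring


lemma csum_sub_row {i : ℕ} (j : ℕ) (hi : 1 ≤ i) :
    cornerSum A i j = cornerSum A (i - 1) j + rowPartial A i j := by
  obtain ⟨m, rfl⟩ : ∃ m, i = m + 1 := ⟨i - 1, by omega⟩
  simpa using csum_row_succ A m j

lemma csum_sub_col (i : ℕ) {j : ℕ} (hj : 1 ≤ j) :
    cornerSum A i j = cornerSum A i (j - 1) + colPartial A i j := by
  obtain ⟨m, rfl⟩ : ∃ m, j = m + 1 := ⟨j - 1, by omega⟩
  simpa using csum_col_succ A i m

lemma diag_facts (hA : IsASM A) {i j : ℕ} (h : InDiagram A i j) :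
    1 ≤ i ∧ i ≤ n ∧ 1 ≤ j ∧ j ≤ n ∧
      cornerSum A i j < (i : ℤ) ∧ cornerSum A i j < (j : ℤ) ∧
      i + j ≤ n + (cornerSum A i j).toNat := by
  rw [diag_iff hA] at h
  obtain ⟨hi1, hin, hj1, hjn, hrp, hcp⟩ := h
  have e1 : cornerSum A i j = cornerSum A (i - 1) j := by
    rw [csum_sub_row (A := A) j hi1, hrp, add_zero]
  have e2 : cornerSum A i j = cornerSum A i (j - 1) := by
    rw [csum_sub_col (A := A) i hj1, hcp, add_zero]
  have b1 : cornerSum A (i - 1) j ≤ ((i - 1 : ℕ) : ℤ) := csum_le_fst hA _ _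
  have b2 : cornerSum A i (j - 1) ≤ ((j - 1 : ℕ) : ℤ) := csum_le_snd hA _ _
  have hnn : 0 ≤ cornerSum A i j := csum_nonneg hA i j
  have htop : cornerSum A n j = (j : ℤ) := csum_col_full hA hjn
  have hlip : cornerSum A n j ≤ cornerSum A i j + ((n - i : ℕ) : ℤ) :=
    csum_lip_row hA j hin
  have htn : ((cornerSum A i j).toNat : ℤ) = cornerSum A i j :=
    Int.toNat_of_nonneg hnn
  refine ⟨hi1, hin, hj1, hjn, ?_, ?_, ?_⟩ <;> omega

lemma phase1 (hA : IsASM A) : ∀ N i j : ℕ, i + j ≤ N → 1 ≤ i → i ≤ n →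
    1 ≤ j → j ≤ n → cornerSum A i j < (i : ℤ) → cornerSum A i j < (j : ℤ) →
    ∃ i' j', InDiagram A i' j' ∧ i' ≤ i ∧ j' ≤ j ∧
      cornerSum A i' j' + ((i - i' : ℕ) : ℤ) + ((j - j' : ℕ) : ℤ)
        ≤ cornerSum A i j := by
  intro N
  induction N with
  | zero => intro i j hN hi1 _ hj1 _ _ _; omega
  | succ N ih =>
    intro i j hN hi1 hin hj1 hjn hlti hltj
    rcases hA.1 i j with hrp | hrp
    · rcases hA.2.1 i j with hcp | hcp
      · refine ⟨i, j, (diag_iff hA i j).2 ⟨hi1, hin, hj1, hjn, hrp, hcp⟩,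
          le_rfl, le_rfl, ?_⟩
        simp
      · -- move left
        have e : cornerSum A i (j - 1) = cornerSum A i j - 1 := by
          have := csum_sub_col (A := A) i hj1
          omega
        have hj2 : 2 ≤ j := by
          by_contra hc
          have hj' : j = 1 := by omega
          subst hj'
          have h0 : cornerSum A i 0 = 0 := csum_zero_col A i
          have := csum_sub_col (A := A) i le_rfl
          norm_num at this
          omega
        obtain ⟨i', j', hd, hi', hj', hsum⟩ :=
          ih i (j - 1) (by omega) hi1 hin (by omega) (by omega)
            (by omega) (by push_cast; omega)
        refine ⟨i', j', hd, hi', by omega, ?_⟩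
        have c1 : ((j - j' : ℕ) : ℤ) = ((j - 1 - j' : ℕ) : ℤ) + 1 := by
          push_cast; omega
        omega
    · -- move up
      have e : cornerSum A (i - 1) j = cornerSum A i j - 1 := by
        have := csum_sub_row (A := A) j hi1
        omega
      have hi2 : 2 ≤ i := by
        by_contra hc
        have hi' : i = 1 := by omega
        subst hi'
        have h0 : cornerSum A 0 j = 0 := csum_zero_row A j
        have := csum_sub_row (A := A) j le_rfl
        norm_num at this
        omega
      obtain ⟨i', j', hd, hi', hj', hsum⟩ :=
        ih (i - 1) j (by omega) (by omega) (by omega) hj1 hjn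
          (by push_cast; omega) (by omega)
      refine ⟨i', j', hd, by omega, hj', ?_⟩
      have c1 : ((i - i' : ℕ) : ℤ) = ((i - 1 - i' : ℕ) : ℤ) + 1 := by
        push_cast; omega
      omega

lemma phase2 (hA : IsASM A) : ∀ M i j : ℕ, (n - i) + (n - j) ≤ M →
    InDiagram A i j →
    ∃ i' j', InEss A i' j' ∧ i ≤ i' ∧ j ≤ j' ∧
      cornerSum A i' j' = cornerSum A i j := by
  intro M
  induction M with
  | zero =>
    intro i j hM hd
    by_cases h1 : InDiagram A (i + 1) j
    · have := (diag_iff hA _ _).1 h1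
      obtain ⟨-, -, -, hjn, -, -⟩ := (diag_iff hA _ _).1 hd
      omega
    by_cases h2 : InDiagram A i (j + 1)
    · have := (diag_iff hA _ _).1 h2
      obtain ⟨-, hin, -, -, -, -⟩ := (diag_iff hA _ _).1 hd
      omega
    exact ⟨i, j, ⟨hd, h1, h2⟩, le_rfl, le_rfl, rfl⟩
  | succ M ih =>
    intro i j hM hd
    by_cases h1 : InDiagram A (i + 1) j
    · have hf := (diag_iff hA _ _).1 h1
      obtain ⟨i', j', he, hi', hj', hcs⟩ := ih (i + 1) j (by omega) h1
      have e : cornerSum A (i + 1) j = cornerSum A i j := by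
        rw [csum_row_succ, hf.2.2.2.2.1, add_zero]
      exact ⟨i', j', he, by omega, hj', by omega⟩
    by_cases h2 : InDiagram A i (j + 1)
    · have hf := (diag_iff hA _ _).1 h2
      obtain ⟨i', j', he, hi', hj', hcs⟩ := ih i (j + 1) (by omega) h2
      have e : cornerSum A i (j + 1) = cornerSum A i j := by
        rw [csum_col_succ, hf.2.2.2.2.2, add_zero]
      exact ⟨i', j', he, hi', by omega, by omega⟩
    exact ⟨i, j, ⟨hd, h1, h2⟩, le_rfl, le_rfl, rfl⟩


lemma diag_r (hA : IsASM A) {i j : ℕ} (hd : InDiagram A i j) :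
    ((cornerSum A i j).toNat : ℤ) = cornerSum A i j ∧
      (cornerSum A i j).toNat < i ∧ (cornerSum A i j).toNat < j ∧
      i + j ≤ n + (cornerSum A i j).toNat ∧ 1 ≤ i ∧ i ≤ n ∧ 1 ≤ j ∧ j ≤ n := by
  obtain ⟨hi1, hin, hj1, hjn, hlti, hltj, hijn⟩ := diag_facts hA hd
  have hrz : ((cornerSum A i j).toNat : ℤ) = cornerSum A i j :=
    Int.toNat_of_nonneg (csum_nonneg hA i j)
  exact ⟨hrz, by omega, by omega, hijn, hi1, hin, hj1, hjn⟩

lemma part1 (hA : IsASM A) {i j : ℕ} (hess : InEss A i j) {a b : ℕ}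
    (han : a ≤ n) (hbn : b ≤ n) :
    cornerSum A a b ≤
      cornerSum (biGrMatrix n i j (cornerSum A i j).toNat) a b := by
  obtain ⟨hrz, hri, hrj, hijn, hi1, hin, hj1, hjn⟩ := diag_r hA hess.1
  set r := (cornerSum A i j).toNat with hrdef
  rw [csum_biGr hri hrj hijn han hbn]
  have h1 : cornerSum A a b ≤ (a : ℤ) := csum_le_fst hA a b
  have h2 : cornerSum A a b ≤ (b : ℤ) := csum_le_snd hA a b
  have h3 : cornerSum A a b ≤ (r : ℤ) + ((a - i : ℕ) : ℤ) + ((b - j : ℕ) : ℤ) := by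
    have m1 : cornerSum A a b ≤ cornerSum A (max a i) (max b j) :=
      le_trans (csum_mono_row hA b (le_max_left a i))
        (csum_mono_col hA (max a i) (le_max_left b j))
    have m2 : cornerSum A (max a i) (max b j)
        ≤ cornerSum A i (max b j) + ((max a i - i : ℕ) : ℤ) :=
      csum_lip_row hA (max b j) (le_max_right a i)
    have m3 : cornerSum A i (max b j)
        ≤ cornerSum A i j + ((max b j - j : ℕ) : ℤ) :=
      csum_lip_col hA i (le_max_right b j)
    have e1 : max a i - i = a - i := by omega
    have e2 : max b j - j = b - j := by omega
    rw [e1] at m2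
    rw [e2] at m3
    omega
  omega

lemma part2ex (hA : IsASM A)
    (hne : ∃ a₀ b₀ : ℕ, 1 ≤ a₀ ∧ a₀ ≤ n ∧ 1 ≤ b₀ ∧ b₀ ≤ n ∧
      cornerSum A a₀ b₀ < (a₀ : ℤ) ∧ cornerSum A a₀ b₀ < (b₀ : ℤ))
    {a b : ℕ} (ha1 : 1 ≤ a) (han : a ≤ n) (hb1 : 1 ≤ b) (hbn : b ≤ n) :
    ∃ i j : ℕ, InEss A i j ∧
      cornerSum (biGrMatrix n i j (cornerSum A i j).toNat) a b
        = cornerSum A a b := by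
  by_cases hcase : cornerSum A a b < (a : ℤ) ∧ cornerSum A a b < (b : ℤ)
  · obtain ⟨i₁, j₁, hd, hi₁, hj₁, hsum⟩ :=
      phase1 hA (a + b) a b le_rfl ha1 han hb1 hbn hcase.1 hcase.2
    obtain ⟨i, j, hess, hii, hjj, hcs⟩ := phase2 hA (n + n) i₁ j₁ (by omega) hd
    obtain ⟨hrz, hri, hrj, hijn, hi1, hin, hj1, hjn⟩ := diag_r hA hess.1
    refine ⟨i, j, hess, le_antisymm ?_ (part1 hA hess han hbn)⟩
    rw [csum_biGr hri hrj hijn han hbn]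
    set r := (cornerSum A i j).toNat with hrdef
    have e1 : a - i ≤ a - i₁ := by omega
    have e2 : b - j ≤ b - j₁ := by omega
    have e3 : ((a - i₁ : ℕ) : ℤ) + ((b - j₁ : ℕ) : ℤ) + cornerSum A i₁ j₁
        ≤ cornerSum A a b := by omega
    omega
  · obtain ⟨a₀, b₀, ha₀1, ha₀n, hb₀1, hb₀n, hlt1, hlt2⟩ := hne
    obtain ⟨i₁, j₁, hd, -, -, -⟩ :=
      phase1 hA (a₀ + b₀) a₀ b₀ le_rfl ha₀1 ha₀n hb₀1 hb₀n hlt1 hlt2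
    obtain ⟨i, j, hess, -, -, -⟩ := phase2 hA (n + n) i₁ j₁ (by omega) hd
    obtain ⟨hrz, hri, hrj, hijn, hi1, hin, hj1, hjn⟩ := diag_r hA hess.1
    refine ⟨i, j, hess, le_antisymm ?_ (part1 hA hess han hbn)⟩
    rw [csum_biGr hri hrj hijn han hbn]
    have h1 : cornerSum A a b ≤ (a : ℤ) := csum_le_fst hA a b
    have h2 : cornerSum A a b ≤ (b : ℤ) := csum_le_snd hA a b
    omega


lemma entry1_fin (k l : Fin n) : entry1 A ((k : ℕ) + 1) ((l : ℕ) + 1) = A k l := by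
  have hk := k.isLt
  have hl := l.isLt
  unfold entry1
  rw [dif_pos ⟨by omega, by omega, by omega, by omega⟩]
  congr 1 <;> · ext; simp

lemma entry_rec {i j : ℕ} (hi : 1 ≤ i) (hj : 1 ≤ j) :
    entry1 A i j = cornerSum A i j - cornerSum A (i - 1) j
      - cornerSum A i (j - 1) + cornerSum A (i - 1) (j - 1) := by
  obtain ⟨a, rfl⟩ : ∃ a, i = a + 1 := ⟨i - 1, by omega⟩
  obtain ⟨b, rfl⟩ : ∃ b, j = b + 1 := ⟨j - 1, by omega⟩
  have h1 := csum_row_succ A a (b + 1)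
  have h2 := rowPartial_succ A (a + 1) b
  have h3 := csum_row_succ A a b
  simp only [Nat.add_sub_cancel]
  omega

lemma exists_lt (hA : IsASM A) (h1 : A ≠ 1) :
    ∃ a b : ℕ, 1 ≤ a ∧ a ≤ n ∧ 1 ≤ b ∧ b ≤ n ∧
      cornerSum A a b < (a : ℤ) ∧ cornerSum A a b < (b : ℤ) := by
  by_contra hc
  have hmin : ∀ a b : ℕ, a ≤ n → b ≤ n → cornerSum A a b = min (a : ℤ) b := by
    intro a b han hbn
    have hu1 : cornerSum A a b ≤ (a : ℤ) := csum_le_fst hA a b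
    have hu2 : cornerSum A a b ≤ (b : ℤ) := csum_le_snd hA a b
    rcases Nat.eq_zero_or_pos a with rfl | ha1
    · rw [csum_zero_row]; omega
    rcases Nat.eq_zero_or_pos b with rfl | hb1
    · rw [csum_zero_col]; omega
    have hnc : ¬(cornerSum A a b < (a : ℤ) ∧ cornerSum A a b < (b : ℤ)) :=
      fun h => hc ⟨a, b, ha1, han, hb1, hbn, h.1, h.2⟩
    omega
  apply h1
  apply Matrix.ext
  intro k l
  have hk := k.isLt
  have hl := l.isLt
  have e := entry_rec (A := A) (i := (k : ℕ) + 1) (j := (l : ℕ) + 1)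
    (by omega) (by omega)
  rw [entry1_fin] at e
  simp only [Nat.add_sub_cancel] at e
  rw [hmin _ _ (by omega) (by omega), hmin _ _ (by omega) (by omega),
    hmin _ _ (by omega) (by omega), hmin _ _ (by omega) (by omega)] at e
  rw [Matrix.one_apply]
  by_cases hkl : k = l
  · rw [if_pos hkl]
    have : (k : ℕ) = (l : ℕ) := by rw [hkl]
    omega
  · rw [if_neg hkl]
    have : (k : ℕ) ≠ (l : ℕ) := fun h => hkl (Fin.ext h)
    omega

end Stmt9
/-- Let `A ∈ ASM(n)` with `A` not the identity.  Then `A` is the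
join of the biGrassmannians indexed by its essential set: for all
`1 ≤ a,b ≤ n`, `r_A(a,b)` is the minimum over `(i,j) ∈ Ess(A)` of
`r_{[i,j,r_A(i,j)]_b}(a,b)`.  In particular `A` is uniquely determined by the
restriction of its corner sum function to `Ess(A)`. -/
theorem stmt9 {n : ℕ} (A : Matrix (Fin n) (Fin n) ℤ) (hA : IsASM A)
    (hA1 : A ≠ 1) :
    (∀ a b : ℕ, 1 ≤ a → a ≤ n → 1 ≤ b → b ≤ n →
      ((∀ i j : ℕ, InEss A i j →
          cornerSum A a b ≤
            cornerSum (biGrMatrix n i j (cornerSum A i j).toNat) a b) ∧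
       (∃ i j : ℕ, InEss A i j ∧
          cornerSum (biGrMatrix n i j (cornerSum A i j).toNat) a b =
            cornerSum A a b))) ∧
    (∀ B : Matrix (Fin n) (Fin n) ℤ, IsASM B →
      (∀ i j : ℕ, InEss B i j ↔ InEss A i j) →
      (∀ i j : ℕ, InEss A i j → cornerSum B i j = cornerSum A i j) →
      B = A) := by

  constructor
  · intro a b ha1 han hb1 hbn
    have hne := Stmt9.exists_lt hA hA1
    exact ⟨fun i j hess => Stmt9.part1 hA hess han hbn,
      Stmt9.part2ex hA hne ha1 han hb1 hbn⟩
  · intro B hB hEss hCS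
    have hne := Stmt9.exists_lt hA hA1
    -- produce a strict cell for B via a common essential cell
    obtain ⟨a₀, b₀, ha₀1, ha₀n, hb₀1, hb₀n, hlt1, hlt2⟩ := hne
    obtain ⟨i₁, j₁, hd, -, -, -⟩ :=
      Stmt9.phase1 hA (a₀ + b₀) a₀ b₀ le_rfl ha₀1 ha₀n hb₀1 hb₀n hlt1 hlt2
    obtain ⟨i₀, j₀, hessA₀, -, -, -⟩ :=
      Stmt9.phase2 hA (n + n) i₁ j₁ (by omega) hd
    have hessB₀ : InEss B i₀ j₀ := (hEss i₀ j₀).2 hessA₀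
    have hfB := Stmt9.diag_facts hB hessB₀.1
    have hneB : ∃ a₀ b₀ : ℕ, 1 ≤ a₀ ∧ a₀ ≤ n ∧ 1 ≤ b₀ ∧ b₀ ≤ n ∧
        cornerSum B a₀ b₀ < (a₀ : ℤ) ∧ cornerSum B a₀ b₀ < (b₀ : ℤ) :=
      ⟨i₀, j₀, hfB.1, hfB.2.1, hfB.2.2.1, hfB.2.2.2.1,
        hfB.2.2.2.2.1, hfB.2.2.2.2.2.1⟩
    have hneA : ∃ a₀ b₀ : ℕ, 1 ≤ a₀ ∧ a₀ ≤ n ∧ 1 ≤ b₀ ∧ b₀ ≤ n ∧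
        cornerSum A a₀ b₀ < (a₀ : ℤ) ∧ cornerSum A a₀ b₀ < (b₀ : ℤ) :=
      ⟨a₀, b₀, ha₀1, ha₀n, hb₀1, hb₀n, hlt1, hlt2⟩
    have key : ∀ a b : ℕ, a ≤ n → b ≤ n → cornerSum B a b = cornerSum A a b := by
      intro a b han hbn
      rcases Nat.eq_zero_or_pos a with rfl | ha1
      · rw [Stmt9.csum_zero_row, Stmt9.csum_zero_row]
      rcases Nat.eq_zero_or_pos b with rfl | hb1
      · rw [Stmt9.csum_zero_col, Stmt9.csum_zero_col]
      obtain ⟨i, j, hessB, heqB⟩ := Stmt9.part2ex hB hneB ha1 han hb1 hbn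
      have hessA : InEss A i j := (hEss i j).1 hessB
      have hr : cornerSum B i j = cornerSum A i j := hCS i j hessA
      have h1 : cornerSum A a b ≤
          cornerSum (biGrMatrix n i j (cornerSum B i j).toNat) a b := by
        rw [hr]; exact Stmt9.part1 hA hessA han hbn
      rw [heqB] at h1
      obtain ⟨i', j', hessA', heqA⟩ := Stmt9.part2ex hA hneA ha1 han hb1 hbn
      have hessB' : InEss B i' j' := (hEss i' j').2 hessA'
      have hr' : cornerSum B i' j' = cornerSum A i' j' := hCS i' j' hessA'
      have h2 : cornerSum B a b ≤
          cornerSum (biGrMatrix n i' j' (cornerSum A i' j').toNat) a b := by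
        rw [← hr']; exact Stmt9.part1 hB hessB' han hbn
      rw [heqA] at h2
      omega
    apply Matrix.ext
    intro k l
    have hk := k.isLt
    have hl := l.isLt
    have eB := Stmt9.entry_rec (A := B) (i := (k : ℕ) + 1) (j := (l : ℕ) + 1)
      (by omega) (by omega)
    have eA := Stmt9.entry_rec (A := A) (i := (k : ℕ) + 1) (j := (l : ℕ) + 1)
      (by omega) (by omega)
    rw [Stmt9.entry1_fin] at eB eA
    simp only [Nat.add_sub_cancel] at eB eA
    rw [key _ _ (by omega) (by omega), key _ _ (by omega) (by omega),
      key _ _ (by omega) (by omega), key _ _ (by omega) (by omega)] at eB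
    omega
end

section
/- Every partial alternating sign matrix has a completion to an honest ASM: for every A ∈ PA(n) there exist an integer N with n ≤ N ≤ 2n and a matrix Ã ∈ ASM(N) such that the submatrix of à consisting of its first n rows and first n columns equals A. -/
/-!
Let `r` and `c` be the row and column sums of `A`; they take values in `{0, 1}`. The block matrix
`[[A, diag (1 - r)], [diag (1 - c), P]]` is an ASM whenever `P ≥ 0` has row sums `c` and column
sums `r`: a top row is a row of `A` followed by a single entry `1 - rᵢ`, which brings every later
partial sum to `1`, and a bottom row is non-negative with sum `1`. Columns are the same argument
for `Aᵀ`. Since `∑ r = ∑ c`, some permutation `σ` satisfies `r ∘ σ = c`, and the rows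
`P x = Pi.single (σ x) (c x)` work.
-/

open Finset Matrix

section PrefixSums

variable {m : ℕ}

def prefixSum (v : Fin m → ℤ) (j : ℕ) : ℤ := ∑ l ∈ univ.filter fun l : Fin m => (l : ℕ) < j, v l

def IsPartialASMRow (v : Fin m → ℤ) : Prop := ∀ j, prefixSum v j = 0 ∨ prefixSum v j = 1

def IsASMRow (v : Fin m → ℤ) : Prop := IsPartialASMRow v ∧ ∑ l, v l = 1

lemma prefixSum_of_le {v : Fin m → ℤ} {j : ℕ} (hj : m ≤ j) : prefixSum v j = ∑ l, v l := by
  unfold prefixSum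
  rw [filter_true_of_mem fun l _ => by omega]

lemma IsPartialASMRow.sum_eq_zero_or_eq_one {v : Fin m → ℤ} (hv : IsPartialASMRow v) :
    ∑ l, v l = 0 ∨ ∑ l, v l = 1 := by
  simpa only [prefixSum_of_le le_rfl] using hv m

lemma prefixSum_single (i : Fin m) (c : ℤ) (j : ℕ) :
    prefixSum (Pi.single i c) j = if (i : ℕ) < j then c else 0 := by
  rw [prefixSum, sum_filter, sum_eq_single i] <;> simp +contextual

lemma prefixSum_append {n : ℕ} (v : Fin m → ℤ) (w : Fin n → ℤ) (j : ℕ) :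
    prefixSum (Fin.append v w) j = prefixSum v j + prefixSum w (j - m) := by
  simp only [prefixSum, sum_filter, Fin.sum_univ_add, Fin.append_left, Fin.append_right,
    Fin.val_castAdd, Fin.val_natAdd]
  congr 1
  exact sum_congr rfl fun l _ => if_congr (by omega) rfl rfl

lemma sum_append {n : ℕ} (v : Fin m → ℤ) (w : Fin n → ℤ) :
    ∑ l, Fin.append v w l = ∑ l, v l + ∑ l, w l := by
  simp only [Fin.sum_univ_add, Fin.append_left, Fin.append_right]

lemma isASMRow_of_nonneg {v : Fin m → ℤ} (hv : ∀ l, 0 ≤ v l) (hsum : ∑ l, v l = 1) :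
    IsASMRow v := by
  refine ⟨fun j => ?_, hsum⟩
  have h0 : 0 ≤ prefixSum v j := sum_nonneg fun l _ => hv l
  have h1 : prefixSum v j ≤ 1 :=
    hsum ▸ sum_le_sum_of_subset_of_nonneg (filter_subset _ _) fun l _ _ => hv l
  omega

lemma isASMRow_append_single {v : Fin m → ℤ} (hv : IsPartialASMRow v) (i : Fin m) :
    IsASMRow (Fin.append v (Pi.single i (1 - ∑ l, v l))) := by
  refine ⟨fun j => ?_, by simp [sum_append]⟩
  rw [prefixSum_append, prefixSum_single]
  by_cases hj : m ≤ j
  · rw [prefixSum_of_le hj]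
    rcases hv.sum_eq_zero_or_eq_one with h | h <;> rw [h] <;> split_ifs <;> simp
  · rw [if_neg (by omega), add_zero]
    exact hv j

end PrefixSums

section OneBased

variable {m : ℕ} (M : Matrix (Fin m) (Fin m) ℤ)

lemma entry1_transpose (i j : ℕ) : entry1 Mᵀ i j = entry1 M j i := by
  unfold entry1
  split_ifs <;> first | rfl | omega

lemma colPartial_eq_rowPartial_transpose (i j : ℕ) : colPartial M i j = rowPartial Mᵀ j i := by
  simp only [colPartial, rowPartial, entry1_transpose]

lemma rowPartial_eq_zero {i : ℕ} (hi : ¬(1 ≤ i ∧ i ≤ m)) (j : ℕ) : rowPartial M i j = 0 :=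
  sum_eq_zero fun l _ => dif_neg (by omega)

lemma rowPartial_add_one (a : Fin m) (j : ℕ) :
    rowPartial M ((a : ℕ) + 1) j = prefixSum (M a) j := by
  have entry1_eq (l : Fin m) : entry1 M (a + 1) (l + 1) = M a l := by
    rw [entry1, dif_pos (by omega)]; rfl
  symm
  refine sum_bij_ne_zero (fun l _ _ => (l : ℕ) + 1) (fun l hl _ => ?_)
    (fun l _ _ l' _ _ h => Fin.ext (by omega)) (fun b hb hne => ?_)
    (fun l _ _ => (entry1_eq l).symm)
  · simp only [mem_filter, mem_univ, true_and] at hl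
    simp only [mem_Icc]; omega
  · simp only [mem_Icc] at hb
    have hbm : b ≤ m := by
      by_contra h
      exact hne (dif_neg (by omega))
    exact ⟨⟨b - 1, by omega⟩, by simp only [mem_filter, mem_univ, true_and]; omega,
      by rwa [← entry1_eq, show b - 1 + 1 = b by omega], by simp only; omega⟩

lemma IsPartialASM.isPartialASMRow {A : Matrix (Fin m) (Fin m) ℤ} (hA : IsPartialASM A)
    (a : Fin m) : IsPartialASMRow (A a) := fun j => by
  rw [← rowPartial_add_one]
  exact hA.1 _ j

lemma IsPartialASM.isPartialASMRow_transpose {A : Matrix (Fin m) (Fin m) ℤ}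
    (hA : IsPartialASM A) (a : Fin m) : IsPartialASMRow (Aᵀ a) := fun j => by
  rw [← rowPartial_add_one, ← colPartial_eq_rowPartial_transpose]
  exact hA.2 j _

lemma exists_fin_add_one_eq {i : ℕ} (h₁ : 1 ≤ i) (h₂ : i ≤ m) : ∃ a : Fin m, (a : ℕ) + 1 = i :=
  ⟨⟨i - 1, by omega⟩, by simp only; omega⟩

lemma rowPartial_eq_zero_or_eq_one (hrow : ∀ a, IsPartialASMRow (M a)) (i j : ℕ) :
    rowPartial M i j = 0 ∨ rowPartial M i j = 1 := by
  by_cases hi : 1 ≤ i ∧ i ≤ m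
  · obtain ⟨a, rfl⟩ := exists_fin_add_one_eq hi.1 hi.2
    rw [rowPartial_add_one]
    exact hrow a j
  · exact Or.inl (rowPartial_eq_zero M hi j)

lemma rowPartial_self_eq_one (hrow : ∀ a, ∑ l, M a l = 1) {i : ℕ} (h₁ : 1 ≤ i) (h₂ : i ≤ m) :
    rowPartial M i m = 1 := by
  obtain ⟨a, rfl⟩ := exists_fin_add_one_eq h₁ h₂
  rw [rowPartial_add_one, prefixSum_of_le le_rfl, hrow a]

lemma isASM_of_rows (hrow : ∀ a, IsASMRow (M a)) (hcol : ∀ a, IsASMRow (Mᵀ a)) : IsASM M := by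
  simp only [IsASM, colPartial_eq_rowPartial_transpose]
  exact ⟨rowPartial_eq_zero_or_eq_one M (fun a => (hrow a).1),
    fun i j => rowPartial_eq_zero_or_eq_one Mᵀ (fun a => (hcol a).1) j i,
    fun i => rowPartial_self_eq_one M (fun a => (hrow a).2),
    fun j => rowPartial_self_eq_one Mᵀ (fun a => (hcol a).2)⟩

end OneBased

section Completion

variable {n : ℕ}

def completion (A P : Matrix (Fin n) (Fin n) ℤ) : Matrix (Fin (n + n)) (Fin (n + n)) ℤ :=
  reindex finSumFinEquiv finSumFinEquiv
    (fromBlocks A (diagonal fun i => 1 - ∑ l, A i l) (diagonal fun l => 1 - ∑ k, A k l) P)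

lemma completion_transpose (A P : Matrix (Fin n) (Fin n) ℤ) :
    (completion A P)ᵀ = completion Aᵀ Pᵀ := by
  simp only [completion, transpose_reindex, fromBlocks_transpose, diagonal_transpose]
  rfl

lemma completion_castAdd (A P : Matrix (Fin n) (Fin n) ℤ) (i : Fin n) :
    completion A P (Fin.castAdd n i) = Fin.append (A i) (Pi.single i (1 - ∑ l, A i l)) := by
  ext l
  refine Fin.addCases (fun l => ?_) (fun l => ?_) l <;>
    simp only [completion, reindex_apply, submatrix_apply, finSumFinEquiv_symm_apply_castAdd,
      finSumFinEquiv_symm_apply_natAdd, fromBlocks_apply₁₁, fromBlocks_apply₁₂,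
      Fin.append_left, Fin.append_right, diagonal_apply, Pi.single_apply, eq_comm]

lemma completion_natAdd (A P : Matrix (Fin n) (Fin n) ℤ) (x : Fin n) :
    completion A P (Fin.natAdd n x) = Fin.append (Pi.single x (1 - ∑ k, A k x)) (P x) := by
  ext l
  refine Fin.addCases (fun l => ?_) (fun l => ?_) l <;>
    simp only [completion, reindex_apply, submatrix_apply, finSumFinEquiv_symm_apply_castAdd,
      finSumFinEquiv_symm_apply_natAdd, fromBlocks_apply₂₁, fromBlocks_apply₂₂,
      Fin.append_left, Fin.append_right, diagonal_apply, Pi.single_apply, eq_comm]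

lemma completion_castLE (A P : Matrix (Fin n) (Fin n) ℤ) (h : n ≤ n + n) (a b : Fin n) :
    completion A P (Fin.castLE h a) (Fin.castLE h b) = A a b := by
  simp only [completion, reindex_apply, submatrix_apply]
  exact congrArg₂ (fromBlocks _ _ _ _) (finSumFinEquiv_symm_apply_castAdd a)
    (finSumFinEquiv_symm_apply_castAdd b)

lemma isASMRow_completion {A P : Matrix (Fin n) (Fin n) ℤ} (hrow : ∀ i, IsPartialASMRow (A i))
    (hcol : ∀ l, ∑ k, A k l ≤ 1) (hP : ∀ x y, 0 ≤ P x y) (hProw : ∀ x, ∑ y, P x y = ∑ k, A k x)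
    (a : Fin (n + n)) : IsASMRow (completion A P a) := by
  refine Fin.addCases (fun i => ?_) (fun x => ?_) a
  · rw [completion_castAdd]
    exact isASMRow_append_single (hrow i) i
  · rw [completion_natAdd]
    refine isASMRow_of_nonneg (fun l => ?_) (by simp [sum_append, hProw])
    refine Fin.addCases (fun l => ?_) (fun l => ?_) l
    · simp only [Fin.append_left, Pi.single_apply]
      split_ifs <;> linarith [hcol x]
    · simpa only [Fin.append_right] using hP x l

lemma isASM_completion {A P : Matrix (Fin n) (Fin n) ℤ} (hA : IsPartialASM A)
    (hP : ∀ x y, 0 ≤ P x y) (hProw : ∀ x, ∑ y, P x y = ∑ k, A k x)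
    (hPcol : ∀ y, ∑ x, P x y = ∑ l, A y l) : IsASM (completion A P) := by
  have hrows (i : Fin n) := hA.isPartialASMRow i
  have hcols (l : Fin n) := hA.isPartialASMRow_transpose l
  have hle {B : Matrix (Fin n) (Fin n) ℤ} (h : ∀ i, IsPartialASMRow (B i)) (i : Fin n) :
      ∑ l, B i l ≤ 1 := by
    rcases (h i).sum_eq_zero_or_eq_one with h | h <;> omega
  refine isASM_of_rows _ (isASMRow_completion hrows (hle hcols) hP hProw) ?_
  rw [completion_transpose]
  exact isASMRow_completion hcols (hle hrows) (fun x y => hP y x) hPcol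

end Completion

lemma exists_perm_comp_eq {α : Type*} [Fintype α] {r c : α → ℤ}
    (hr : ∀ x, r x = 0 ∨ r x = 1) (hc : ∀ x, c x = 0 ∨ c x = 1) (hsum : ∑ x, r x = ∑ x, c x) :
    ∃ σ : Equiv.Perm α, ∀ x, r (σ x) = c x := by
  have hcard (f : α → ℤ) (hf : ∀ x, f x = 0 ∨ f x = 1) :
      ∑ x, f x = Fintype.card {x // f x = 1} := by
    rw [Fintype.card_subtype, ← sum_boole]
    exact sum_congr rfl fun x _ => by rcases hf x with h | h <;> simp [h]
  have e : {x // c x = 1} ≃ {x // r x = 1} :=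
    Fintype.equivOfCardEq (by exact_mod_cast (hcard c hc).symm.trans (hsum.symm.trans (hcard r hr)))
  refine ⟨e.extendSubtype, fun x => ?_⟩
  by_cases hx : c x = 1
  · rw [hx]; exact e.extendSubtype_mem x hx
  · have := e.extendSubtype_not_mem x hx
    rcases hc x with h | h <;> rcases hr (e.extendSubtype x) with h' | h' <;> simp_all

lemma IsPartialASM.exists_completion_block {n : ℕ} {A : Matrix (Fin n) (Fin n) ℤ}
    (hA : IsPartialASM A) : ∃ P : Matrix (Fin n) (Fin n) ℤ, (∀ x y, 0 ≤ P x y) ∧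
      (∀ x, ∑ y, P x y = ∑ k, A k x) ∧ ∀ y, ∑ x, P x y = ∑ l, A y l := by
  obtain ⟨σ, hσ⟩ := exists_perm_comp_eq (r := fun y => ∑ l, A y l) (c := fun x => ∑ k, A k x)
    (fun y => (hA.isPartialASMRow y).sum_eq_zero_or_eq_one)
    (fun x => (hA.isPartialASMRow_transpose x).sum_eq_zero_or_eq_one) sum_comm
  refine ⟨of fun x => Pi.single (σ x) (∑ k, A k x), fun x y => ?_, fun x => ?_, fun y => ?_⟩
  · have := (hA.isPartialASMRow_transpose x).sum_eq_zero_or_eq_one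
    simp only [of_apply, Pi.single_apply]
    split_ifs <;> simp only [transpose_apply] at this <;> omega
  · simp [sum_pi_single']
  · simp only [of_apply, Pi.single_apply, ← Equiv.symm_apply_eq, sum_ite_eq, mem_univ, if_true]
    rw [← hσ, Equiv.apply_symm_apply]

/-- Every partial ASM has a completion to an honest ASM: for
every `A ∈ PA(n)` there exist `n ≤ N ≤ 2n` and `Ã ∈ ASM(N)` whose northwest
`n × n` submatrix is `A`. -/
theorem stmt11 {n : ℕ} (A : Matrix (Fin n) (Fin n) ℤ) (hA : IsPartialASM A) :
    ∃ (N : ℕ) (h : n ≤ N) (B : Matrix (Fin N) (Fin N) ℤ),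
      N ≤ 2 * n ∧ IsASM B ∧
      ∀ a b : Fin n, B (Fin.castLE h a) (Fin.castLE h b) = A a b := by
  obtain ⟨P, hP, hProw, hPcol⟩ := hA.exists_completion_block
  exact ⟨n + n, Nat.le_add_right n n, completion A P, (two_mul n).ge,
    isASM_completion hA hP hProw hPcol, completion_castLE A P _⟩
end
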